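/- arXiv:1609.08207 — 6 statements merged into one kernel-verified Lean document; each statement's English description precedes it below -/
import Mathlib

section
/- Let N be a positive integer with decimal expansion N = ∑_{j=0}^{n−1} a_j 10^j (so 10^{n−1} ≤ N < 10^n). Then ∑_{i=0}^{N} ∑_{j=0}^{n−1} ⟨i/10^j⟩ = (n − 10/9)·N/2 − (1/2)∑_{j=1}^{n−1} ∑_{r=0}^{j−1} a_r 10^r + (1/2)∑_{j=1}^{n−1} 10^{−j} (∑_{r=0}^{j−1} a_r 10^r)² + O(n), where ⟨x⟩ = x − ⌊x⌋ denotes the fractional part. -/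
lemma L1 (m i : ℕ) (hm : 0 < m) : Int.fract ((i:ℝ)/(m:ℝ)) = ((i % m : ℕ):ℝ)/(m:ℝ) := by
  have hm' : (m:ℝ) ≠ 0 := Nat.cast_ne_zero.2 hm.ne'
  conv_lhs => rw [← Nat.div_add_mod i m]
  push_cast
  rw [add_div, mul_div_cancel_left₀ _ hm', add_comm, Int.fract_add_natCast]
  refine Int.fract_eq_self.2 ⟨by positivity, ?_⟩
  rw [div_lt_one (by positivity)]
  exact_mod_cast Nat.mod_lt i hm

lemma L2 (m : ℕ) (hm : 0 < m) (N : ℕ) :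
    ∑ i ∈ Finset.range (N+1), ((i % m : ℕ):ℝ)
      = ((N / m : ℕ):ℝ) * ((m:ℝ) * ((m:ℝ) - 1)) / 2
        + ((N % m : ℕ):ℝ) * (((N % m : ℕ):ℝ) + 1) / 2 := by
  induction N with
  | zero => simp [Nat.mod_eq_of_lt hm]
  | succ N ih =>
    have hdm := Nat.div_add_mod N m
    have hmod := Nat.mod_lt N hm
    rw [Finset.sum_range_succ, ih]
    by_cases h : m ∣ N + 1
    · have hq : (N + 1) / m = N / m + 1 := Nat.succ_div_of_dvd h
      have hr0 : (N + 1) % m = 0 := Nat.mod_eq_zero_of_dvd h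
      have hdd : m ∣ N % m + 1 := by
        have h2 : N + 1 - m * (N / m) = N % m + 1 := by omega
        have := Nat.dvd_sub h (dvd_mul_right m (N / m))
        rwa [h2] at this
      have hrm : N % m + 1 = m :=
        le_antisymm (by omega) (Nat.le_of_dvd (Nat.succ_pos _) hdd)
      have hrR : ((N % m : ℕ):ℝ) = (m:ℝ) - 1 := by
        have : ((N % m : ℕ):ℝ) + 1 = (m:ℝ) := by exact_mod_cast congrArg (Nat.cast (R := ℝ)) hrm
        linarith
      rw [hq, hr0, hrR]
      push_cast
      ring
    · have hq : (N + 1) / m = N / m := Nat.succ_div_of_not_dvd h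
      have hlt : N % m + 1 < m := by
        rcases lt_or_eq_of_le (Nat.succ_le_of_lt hmod) with h' | h'
        · exact h'
        · exact absurd ⟨N / m + 1, by rw [Nat.mul_succ]; omega⟩ h
      have hr : (N + 1) % m = N % m + 1 := by
        have : N + 1 = m * (N / m) + (N % m + 1) := by omega
        rw [this, Nat.mul_add_mod, Nat.mod_eq_of_lt hlt]
      rw [hq, hr]
      push_cast
      ring

lemma L34 (N j : ℕ) :
    ∑ i ∈ Finset.range (N+1), Int.fract ((i:ℝ) / 10 ^ j)
      = (N:ℝ)/2 - (N:ℝ)/2 * ((1:ℝ)/10)^j - (1/2) * ((N % 10^j : ℕ):ℝ)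
        + (1/2) * (((N % 10^j : ℕ):ℝ)^2 / 10^j) + ((N % 10^j : ℕ):ℝ) / 10^j := by
  have hm : 0 < 10^j := Nat.pow_pos (by norm_num)
  have hcast : ((10^j : ℕ):ℝ) = (10:ℝ)^j := by push_cast; ring
  have h10 : (10:ℝ)^j ≠ 0 := by positivity
  have step1 : ∑ i ∈ Finset.range (N+1), Int.fract ((i:ℝ) / 10 ^ j)
      = (∑ i ∈ Finset.range (N+1), ((i % 10^j : ℕ):ℝ)) / ((10^j:ℕ):ℝ) := by
    rw [Finset.sum_div]
    refine Finset.sum_congr rfl fun i _ => ?_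
    rw [← hcast]
    exact L1 _ i hm
  rw [step1, L2 _ hm N, hcast]
  have hd : (10:ℝ)^j * ((N / 10^j : ℕ):ℝ) + ((N % 10^j : ℕ):ℝ) = (N:ℝ) := by
    rw [← hcast]
    exact_mod_cast Nat.div_add_mod N (10^j)
  have hQ : ((N / 10^j : ℕ):ℝ) = ((N:ℝ) - ((N % 10^j : ℕ):ℝ)) / (10:ℝ)^j := by
    field_simp
    linarith
  rw [hQ]
  field_simp
  have h1 : ((1:ℝ)/10)^j * 10^j = 1 := by rw [← mul_pow]; norm_num
  linear_combination (N:ℝ) * h1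


/-- For a positive integer `N` with `n` decimal digits, `n = (Nat.digits 10 N).length`,
the number formed by the last `j` digits is `N % 10^j = ∑_{r<j} a_r 10^r`. -/
theorem stmt2 :
    ∃ C > (0:ℝ), ∀ N : ℕ, 0 < N →
      |(∑ i ∈ Finset.range (N + 1), ∑ j ∈ Finset.range (Nat.digits 10 N).length,
          Int.fract ((i:ℝ) / 10 ^ j)) -
        ((((Nat.digits 10 N).length : ℝ) - 10 / 9) * (N:ℝ) / 2
          - (1 / 2) * ∑ j ∈ Finset.Ico 1 (Nat.digits 10 N).length, ((N % 10 ^ j : ℕ) : ℝ)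
          + (1 / 2) * ∑ j ∈ Finset.Ico 1 (Nat.digits 10 N).length,
              ((N % 10 ^ j : ℕ) : ℝ)^2 / 10 ^ j)| ≤ C * ((Nat.digits 10 N).length : ℝ) := by
  refine ⟨1, one_pos, ?_⟩
  intro N hN
  set n := (Nat.digits 10 N).length with hn_def
  have hn : 0 < n := by
    have : Nat.digits 10 N ≠ [] := Nat.digits_ne_nil_iff_ne_zero.mpr hN.ne'
    exact List.length_pos_iff.mpr this
  have hNlt : N < 10 ^ n := Nat.lt_base_pow_length_digits (by norm_num)
  have hA : (∑ i ∈ Finset.range (N + 1), ∑ j ∈ Finset.range n, Int.fract ((i:ℝ) / 10 ^ j))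
      = ∑ j ∈ Finset.Ico 1 n, ((N:ℝ)/2 - (N:ℝ)/2 * ((1:ℝ)/10)^j - (1/2) * ((N % 10^j : ℕ):ℝ)
        + (1/2) * (((N % 10^j : ℕ):ℝ)^2 / 10^j) + ((N % 10^j : ℕ):ℝ) / 10^j) := by
    rw [Finset.sum_comm, Finset.range_eq_Ico, Finset.sum_eq_sum_Ico_succ_bot hn]
    simp only [← Finset.range_eq_Ico, zero_add]
    rw [show (∑ i ∈ Finset.range (N+1), Int.fract ((i:ℝ)/10^0)) = 0 from by simp]
    rw [zero_add]
    exact Finset.sum_congr rfl fun j _ => L34 N j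
  rw [hA]
  simp only [Finset.sum_add_distrib, Finset.sum_sub_distrib, ← Finset.mul_sum,
    Finset.sum_const, Nat.card_Ico, nsmul_eq_mul]
  have hpow : ((1:ℝ)/10)^n = ((1:ℝ)/10)^(n-1) * (1/10) := by
    rw [← pow_succ]; congr 1; omega
  have hG2 : (N:ℝ)/2 * (∑ i ∈ Finset.Ico 1 n, ((1:ℝ)/10)^i)
      = (N:ℝ)/18 - (N:ℝ)/18 * ((1:ℝ)/10)^(n-1) := by
    rw [geom_sum_Ico (by norm_num) hn, hpow]; ring
  rw [Nat.cast_pred hn, hG2]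
  have hb : (N:ℝ) < 10^n := by exact_mod_cast hNlt
  have h2 : (10:ℝ)^n = 10^(n-1)*10 := by rw [← pow_succ]; congr 1; omega
  have hNa : (N:ℝ) * ((1:ℝ)/10)^(n-1) ≤ 10 := by
    rw [one_div, inv_pow, ← div_eq_mul_inv, div_le_iff₀ (by positivity)]
    nlinarith [pow_pos (show (0:ℝ) < 10 by norm_num) (n-1)]
  have hNa0 : (0:ℝ) ≤ (N:ℝ) * ((1:ℝ)/10)^(n-1) := by positivity
  have hSf0 : (0:ℝ) ≤ ∑ j ∈ Finset.Ico 1 n, ((N % 10^j : ℕ):ℝ)/10^j :=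
    Finset.sum_nonneg fun j _ => by positivity
  have hSf1 : ∑ j ∈ Finset.Ico 1 n, ((N % 10^j : ℕ):ℝ)/10^j ≤ (n:ℝ) - 1 := by
    calc ∑ j ∈ Finset.Ico 1 n, ((N % 10^j : ℕ):ℝ)/10^j
        ≤ ∑ j ∈ Finset.Ico 1 n, (1:ℝ) := by
          refine Finset.sum_le_sum fun j _ => ?_
          rw [div_le_one (by positivity)]
          have h3 : N % 10^j < 10^j := Nat.mod_lt N (Nat.pow_pos (by norm_num))
          calc ((N % 10^j : ℕ):ℝ) ≤ ((10^j : ℕ):ℝ) := by exact_mod_cast h3.le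
            _ = (10:ℝ)^j := by push_cast; ring
      _ = (n:ℝ) - 1 := by
          rw [Finset.sum_const, Nat.card_Ico, nsmul_eq_mul, Nat.cast_pred hn]; ring
  refine abs_le.2 ⟨by linarith, by linarith⟩
end

section
/- Let N be a positive integer with n decimal digits. Then ∑_{i=0}^{N} ( ∑_{j=0}^{n−1} ⟨i/10^j⟩ )² = (n²/4 − 49n/108)·N − (1/2)∑_{j=0}^{n−1} j·S_j + (1/2)∑_{j=0}^{n−1} j·10^{−j}·S_j² + O(N), where S_j = ∑_{l=0}^{j−1} a_l 10^l is the number formed by the last j decimal digits of N. -/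
/-!
Since `⟨i / 10^j⟩ = (i % 10^j) / 10^j`, the square expands into a double sum over digit
positions `j, k` of `∑_{i < N} (i % 10^j) (i % 10^k) / 10^(j+k)`. For `j ≤ k` the summand is
periodic in `i` with period `10^k`: the complete periods contribute a density times `N`, and the
incomplete last one contributes `R (R - 10^k) / (4 · 10^k)` with `R = N % 10^k = S_k`, up to an
error `O(10^j + 10^(k-j))`. Summed over all pairs, the densities give `n²/4 - 49n/108 + O(1)`,
the incomplete-period terms regroup by `max j k` into the `S_k`-terms, and the errors add up to
`O(10^n) = O(N)`.
-/

open Finset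

lemma sum_range_natCast (n : ℕ) : ∑ i ∈ range n, (i : ℝ) = n * (n - 1) / 2 := by
  induction n with
  | zero => simp
  | succ n ih => rw [sum_range_succ, ih]; push_cast; ring

lemma sum_range_natCast_sq (n : ℕ) :
    ∑ i ∈ range n, (i : ℝ) ^ 2 = n * (n - 1) * (2 * n - 1) / 6 := by
  induction n with
  | zero => simp
  | succ n ih => rw [sum_range_succ, ih]; push_cast; ring

lemma sum_range_mul_add_div_mod {M : Type*} [AddCommMonoid M] (f : ℕ → ℕ → M) {q : ℕ}
    (a : ℕ) {r : ℕ} (hr : r ≤ q) :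
    ∑ i ∈ range (a * q + r), f (i / q) (i % q) =
      ∑ s ∈ range a, ∑ t ∈ range q, f s t + ∑ t ∈ range r, f a t := by
  have block : ∀ a r, r ≤ q → ∑ t ∈ range r, f ((a * q + t) / q) ((a * q + t) % q) =
      ∑ t ∈ range r, f a t := fun a r hr => sum_congr rfl fun t ht => by
    have ht : t < q := lt_of_lt_of_le (mem_range.mp ht) hr
    rw [Nat.add_comm, Nat.add_mul_div_right _ _ (by omega), Nat.div_eq_of_lt ht, zero_add,
      Nat.add_mul_mod_self_right, Nat.mod_eq_of_lt ht]
  rw [sum_range_add, block a r hr]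
  congr 1
  induction a with
  | zero => simp
  | succ a ih => rw [Nat.succ_mul, sum_range_add, ih, block a q le_rfl, sum_range_succ]

lemma sum_range_mod {M : Type*} [AddCommMonoid M] (g : ℕ → M) {Q : ℕ} (hQ : 0 < Q) (n : ℕ) :
    ∑ i ∈ range n, g (i % Q) = (n / Q) • ∑ t ∈ range Q, g t + ∑ t ∈ range (n % Q), g t := by
  conv_lhs => rw [← Nat.div_add_mod' n Q]
  rw [sum_range_mul_add_div_mod (fun _ t => g t) _ (Nat.mod_lt n hQ).le, sum_const, card_range]

noncomputable def modWeightedSum (q S b : ℝ) : ℝ :=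
  q ^ 2 * (q - 1) * S * (S - 1) / 4 + S * q * (q - 1) * (2 * q - 1) / 6 +
    S * q * b * (b - 1) / 2 + b * (b - 1) * (2 * b - 1) / 6

lemma sum_range_mod_mul_self_eq (q S : ℕ) {b : ℕ} (hb : b ≤ q) :
    ∑ t ∈ range (S * q + b), ((t % q : ℕ) : ℝ) * t = modWeightedSum q S b := by
  have inner : ∀ s r : ℕ, ∑ u ∈ range r, (u : ℝ) * ((s * q + u : ℕ) : ℝ) =
      s * q * (r * (r - 1) / 2) + r * (r - 1) * (2 * r - 1) / 6 := fun s r => by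
    simp only [Nat.cast_add, Nat.cast_mul, mul_add, sum_add_distrib, ← sq, sum_range_natCast_sq,
      ← sum_mul, sum_range_natCast]
    ring
  calc ∑ t ∈ range (S * q + b), ((t % q : ℕ) : ℝ) * t
      = ∑ t ∈ range (S * q + b), ((t % q : ℕ) : ℝ) * ((t / q * q + t % q : ℕ) : ℝ) := by
        simp only [Nat.div_add_mod']
    _ = modWeightedSum q S b := by
        rw [sum_range_mul_add_div_mod (fun s u => (u : ℝ) * ((s * q + u : ℕ) : ℝ)) S hb]
        simp only [inner, sum_add_distrib, ← sum_mul, sum_range_natCast, sum_const, card_range,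
          nsmul_eq_mul, modWeightedSum]
        ring

-- The mean of `(i % q) * (i % (m * q)) / (q * (m * q))` over one period `i < m * q`.
noncomputable def pairDensity (q m : ℝ) : ℝ :=
  (1 - q⁻¹) * (1 - (m * q)⁻¹) / 4 + (m⁻¹ - (m * q * q)⁻¹) / 12

noncomputable def remainderTerm (Q R : ℝ) : ℝ := R * (R - Q) / (4 * Q)

lemma abs_remainderTerm_le {Q R : ℝ} (hQ : 0 < Q) (hR : 0 ≤ R) (hRQ : R ≤ Q) :
    |remainderTerm Q R| ≤ Q / 4 := by
  rw [remainderTerm, abs_div, abs_of_pos (by positivity : 0 < 4 * Q), div_le_iff₀ (by positivity),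
    abs_le]
  constructor <;> nlinarith

lemma modWeightedSum_period {q m : ℝ} (hq : q ≠ 0) (hm : m ≠ 0) :
    modWeightedSum q m 0 / (q * (m * q)) = pairDensity q m * (m * q) := by
  unfold modWeightedSum pairDensity
  field_simp
  ring

lemma abs_modWeightedSum_sub_le {q m S b : ℝ} (hq : 1 ≤ q) (hm : 1 ≤ m) (hS : 0 ≤ S)
    (hSm : S ≤ m) (hb : 0 ≤ b) (hbq : b ≤ q) :
    |modWeightedSum q S b / (q * (m * q)) -
        (pairDensity q m * (S * q + b) + remainderTerm (m * q) (S * q + b))| ≤ 2 * q + m + 2 := by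
  have hq0 : 0 < q := by linarith
  have hm0 : 0 < m := by linarith
  set X := 4 * b ^ 2 - 6 * b - 3 * q * b + 3 * m * q + 3 * q - q ^ 2
  have key : modWeightedSum q S b / (q * (m * q)) -
        (pairDensity q m * (S * q + b) + remainderTerm (m * q) (S * q + b)) =
      (3 * q ^ 2 * (S * (m - S)) - 6 * q * (S * (b * (q + 1 - b))) + b * X) / (12 * m * q ^ 2) := by
    unfold modWeightedSum pairDensity remainderTerm
    field_simp
    ring
  have hS' : 0 ≤ S * (m - S) ∧ S * (m - S) ≤ m * m :=
    ⟨by nlinarith, by nlinarith⟩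
  have hSb : 0 ≤ S * (b * (q + 1 - b)) ∧ S * (b * (q + 1 - b)) ≤ m * (q * (q + 1)) := by
    have hb' : 0 ≤ b * (q + 1 - b) ∧ b * (q + 1 - b) ≤ q * (q + 1) := ⟨by nlinarith, by nlinarith⟩
    exact ⟨by nlinarith, by nlinarith⟩
  have hbX : |b * X| ≤ q * (8 * q ^ 2 + 9 * q + 3 * m * q) := by
    rw [abs_mul, abs_of_nonneg hb]
    have hX : |X| ≤ 8 * q ^ 2 + 9 * q + 3 * m * q := by
      rw [abs_le]; constructor <;> nlinarith
    exact mul_le_mul hbq hX (abs_nonneg X) hq0.le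
  rw [key, abs_div, abs_of_pos (by positivity : (0:ℝ) < 12 * m * q ^ 2),
    div_le_iff₀ (by positivity), abs_le]
  rw [abs_le] at hbX
  constructor <;> nlinarith [mul_le_mul_of_nonneg_left hm (by positivity : 0 ≤ q ^ 3),
    mul_le_mul_of_nonneg_left hm (by positivity : 0 ≤ q ^ 2)]

theorem abs_sum_mod_mul_mod_sub_le {q m : ℕ} (hq : 0 < q) (hm : 0 < m) (M : ℕ) :
    |(∑ i ∈ range M, ((i % q : ℕ) : ℝ) * ((i % (m * q) : ℕ) : ℝ)) / (q * (m * q)) -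
        (pairDensity q m * M + remainderTerm (m * q) (M % (m * q) : ℕ))| ≤ 2 * q + m + 2 := by
  set R := M % (m * q)
  have hR : R / q * q + R % q = R := Nat.div_add_mod' R q
  have hsum : ∑ i ∈ range M, ((i % q : ℕ) : ℝ) * ((i % (m * q) : ℕ) : ℝ) =
      (M / (m * q) : ℕ) * modWeightedSum q m 0 + modWeightedSum q (R / q : ℕ) (R % q : ℕ) := by
    have periodic : ∀ i, ((i % q : ℕ) : ℝ) * ((i % (m * q) : ℕ) : ℝ) =
        (((i % (m * q)) % q : ℕ) : ℝ) * ((i % (m * q) : ℕ) : ℝ) := fun i => by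
      rw [Nat.mod_mod_of_dvd i (dvd_mul_left q m)]
    simp only [periodic]
    have full : ∑ t ∈ range (m * q), ((t % q : ℕ) : ℝ) * t = modWeightedSum q m 0 := by
      simpa using sum_range_mod_mul_self_eq q m (Nat.zero_le q)
    have part : ∑ t ∈ range R, ((t % q : ℕ) : ℝ) * t =
        modWeightedSum q (R / q : ℕ) (R % q : ℕ) := by
      conv_lhs => rw [← hR]
      exact sum_range_mod_mul_self_eq q _ (Nat.mod_lt R hq).le
    rw [sum_range_mod (fun t => ((t % q : ℕ) : ℝ) * t) (by positivity), nsmul_eq_mul, full, part]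
  have hM : (M : ℝ) = (M / (m * q) : ℕ) * (m * q) + R := by
    exact_mod_cast (Nat.div_add_mod' M (m * q)).symm
  have hRcast : (R : ℝ) = (R / q : ℕ) * q + (R % q : ℕ) := by exact_mod_cast hR.symm
  have hSm : R / q < m := Nat.div_lt_of_lt_mul (mul_comm m q ▸ Nat.mod_lt M (by positivity))
  have error := abs_modWeightedSum_sub_le (q := q) (m := m) (S := (R / q : ℕ)) (b := (R % q : ℕ))
    (by exact_mod_cast hq) (by exact_mod_cast hm) (Nat.cast_nonneg _) (by exact_mod_cast hSm.le)
    (Nat.cast_nonneg _) (by exact_mod_cast (Nat.mod_lt R hq).le)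
  have hq0 : (q : ℝ) ≠ 0 := by positivity
  have hm0 : (m : ℝ) ≠ 0 := by positivity
  convert error using 2
  rw [hsum, hM, hRcast, add_div, mul_div_assoc, modWeightedSum_period hq0 hm0]
  ring

noncomputable def digitPairDensity (j k : ℕ) : ℝ :=
  (1 - 10⁻¹ ^ j) * (1 - 10⁻¹ ^ k) / 4 + (10⁻¹ ^ Nat.dist j k - 10⁻¹ ^ j * 10⁻¹ ^ k) / 12

lemma digitPairDensity_comm (j k : ℕ) : digitPairDensity j k = digitPairDensity k j := by
  unfold digitPairDensity
  rw [Nat.dist_comm]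
  ring

lemma pairDensity_ten_pow (j d : ℕ) :
    pairDensity (10 ^ j) (10 ^ d) = digitPairDensity j (j + d) := by
  rw [pairDensity, digitPairDensity, Nat.dist_eq_sub_of_le (Nat.le_add_right j d),
    Nat.add_sub_cancel_left]
  simp only [inv_pow, pow_add, mul_inv]
  ring

lemma fract_div_ten_pow (i j : ℕ) :
    Int.fract ((i : ℝ) / 10 ^ j) = ((i % 10 ^ j : ℕ) : ℝ) / ((10 ^ j : ℕ) : ℝ) := by
  rw [← Int.fract_div_natCast_eq_div_natCast_mod, Nat.cast_pow, Nat.cast_ofNat]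

theorem abs_sum_fract_mul_fract_sub_le (N j k : ℕ) :
    |∑ i ∈ range N, Int.fract ((i : ℝ) / 10 ^ j) * Int.fract ((i : ℝ) / 10 ^ k) -
        (digitPairDensity j k * N + remainderTerm (10 ^ max j k) (N % 10 ^ max j k : ℕ))| ≤
      2 * 10 ^ min j k + 10 ^ Nat.dist j k + 2 := by
  wlog h : j ≤ k generalizing j k
  · rw [digitPairDensity_comm, max_comm, min_comm, Nat.dist_comm]
    simpa only [mul_comm (Int.fract ((_ : ℕ) / (10 : ℝ) ^ k))] using this k j (le_of_not_ge h)
  obtain ⟨d, rfl⟩ := Nat.exists_eq_add_of_le h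
  have core := abs_sum_mod_mul_mod_sub_le (q := 10 ^ j) (m := 10 ^ d) (by positivity)
    (by positivity) N
  rw [← pow_add, Nat.add_comm d j] at core
  push_cast at core
  rw [pairDensity_ten_pow, ← pow_add, Nat.add_comm d j] at core
  rw [max_eq_right h, min_eq_left h, Nat.dist_eq_sub_of_le h, Nat.add_sub_cancel_left]
  simp only [fract_div_ten_pow, div_mul_div_comm, ← sum_div]
  push_cast
  convert core using 3

lemma sum_sum_range_succ_of_comm {M : Type*} [AddCommMonoid M] {F : ℕ → ℕ → M}
    (hF : ∀ j k, F j k = F k j) (n : ℕ) :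
    ∑ j ∈ range (n + 1), ∑ k ∈ range (n + 1), F j k =
      ∑ j ∈ range n, ∑ k ∈ range n, F j k + 2 • ∑ j ∈ range n, F j n + F n n := by
  simp only [sum_range_succ, sum_add_distrib, hF n, two_nsmul]
  abel

lemma sum_range_pow_sub {R : Type*} [Semiring R] (a : R) (n : ℕ) :
    ∑ j ∈ range n, a ^ (n - j) = a * ∑ j ∈ range n, a ^ j := by
  rw [mul_sum, ← sum_range_reflect]
  refine sum_congr rfl fun j hj => ?_
  rw [← pow_succ', show n - (n - 1 - j) = j + 1 by have := mem_range.mp hj; omega]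

lemma sum_range_pow_dist {R : Type*} [Semiring R] (a : R) (n : ℕ) :
    ∑ j ∈ range n, a ^ Nat.dist j n = a * ∑ j ∈ range n, a ^ j := by
  rw [← sum_range_pow_sub]
  exact sum_congr rfl fun j hj => by rw [Nat.dist_eq_sub_of_le (mem_range.mp hj).le]

lemma sum_range_ten_pow (n : ℕ) : ∑ j ∈ range n, (10 : ℝ) ^ j = (10 ^ n - 1) / 9 := by
  rw [geom_sum_eq (by norm_num)]
  norm_num

lemma sum_range_inv_ten_pow (n : ℕ) :
    ∑ j ∈ range n, (10 : ℝ)⁻¹ ^ j = 10 / 9 * (1 - 10⁻¹ ^ n) := by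
  rw [geom_sum_eq (by norm_num)]
  ring

lemma sum_sum_max (G : ℕ → ℝ) (n : ℕ) :
    ∑ j ∈ range n, ∑ k ∈ range n, G (max j k) = ∑ k ∈ range n, (2 * k + 1) * G k := by
  induction n with
  | zero => simp
  | succ n ih =>
    have edge : ∑ j ∈ range n, G (max j n) = ∑ j ∈ range n, G n :=
      sum_congr rfl fun j hj => by rw [max_eq_right (mem_range.mp hj).le]
    rw [sum_sum_range_succ_of_comm (fun j k => by rw [max_comm]), ih, edge, sum_range_succ,
      sum_const, card_range, max_self]
    simp only [nsmul_eq_mul]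
    push_cast
    ring

lemma sum_sum_ten_pow_min_le (n : ℕ) :
    ∑ j ∈ range n, ∑ k ∈ range n, (10 : ℝ) ^ min j k ≤ 2 * 10 ^ n := by
  induction n with
  | zero => simp
  | succ n ih =>
    have edge : ∑ j ∈ range n, (10 : ℝ) ^ min j n = ∑ j ∈ range n, 10 ^ j :=
      sum_congr rfl fun j hj => by rw [min_eq_left (mem_range.mp hj).le]
    rw [sum_sum_range_succ_of_comm (fun j k => by rw [min_comm]), edge, min_self,
      sum_range_ten_pow, nsmul_eq_mul, pow_succ]
    push_cast
    linarith [pow_pos (by norm_num : (0 : ℝ) < 10) n]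

lemma sum_sum_ten_pow_dist_le (n : ℕ) :
    ∑ j ∈ range n, ∑ k ∈ range n, (10 : ℝ) ^ Nat.dist j k ≤ 2 * 10 ^ n := by
  induction n with
  | zero => simp
  | succ n ih =>
    rw [sum_sum_range_succ_of_comm (fun j k => by rw [Nat.dist_comm]), sum_range_pow_dist,
      Nat.dist_self, sum_range_ten_pow, nsmul_eq_mul, pow_succ, pow_zero]
    push_cast
    linarith [one_le_pow₀ (by norm_num : (1 : ℝ) ≤ 10) (n := n)]

lemma sum_sum_inv_ten_pow_dist (n : ℕ) :
    ∑ j ∈ range n, ∑ k ∈ range n, (10 : ℝ)⁻¹ ^ Nat.dist j k =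
      11 * n / 9 - 20 / 81 * (1 - 10⁻¹ ^ n) := by
  induction n with
  | zero => simp
  | succ n ih =>
    rw [sum_sum_range_succ_of_comm (fun j k => by rw [Nat.dist_comm]), ih, sum_range_pow_dist,
      Nat.dist_self, sum_range_inv_ten_pow, nsmul_eq_mul]
    push_cast
    ring

lemma abs_sum_sum_digitPairDensity_sub_le (n : ℕ) :
    |∑ j ∈ range n, ∑ k ∈ range n, digitPairDensity j k - (n ^ 2 / 4 - 49 * n / 108)| ≤ 1 := by
  set y : ℝ := 10⁻¹ ^ n
  have hsum : ∑ j ∈ range n, ∑ k ∈ range n, digitPairDensity j k =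
      (n - 10 / 9 * (1 - y)) ^ 2 / 4 +
        ((11 * n / 9 - 20 / 81 * (1 - y)) - (10 / 9 * (1 - y)) ^ 2) / 12 := by
    simp only [digitPairDensity, sum_add_distrib, ← sum_div, sum_sub_distrib, ← sum_mul_sum,
      sum_sum_inv_ten_pow_dist, sum_range_inv_ten_pow, sum_const, card_range, nsmul_eq_mul, mul_one]
    ring
  have hy : 0 ≤ y ∧ y ≤ 1 := ⟨by positivity, pow_le_one₀ (by norm_num) (by norm_num)⟩
  have hny : 0 ≤ n * y ∧ n * y ≤ 1 := by
    refine ⟨by positivity, ?_⟩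
    have : (n : ℝ) ≤ 10 ^ n := by exact_mod_cast (Nat.lt_pow_self (by norm_num)).le
    calc (n : ℝ) * y ≤ 10 ^ n * 10⁻¹ ^ n := by gcongr
      _ = 1 := by rw [← mul_pow]; norm_num
  rw [hsum, abs_le]
  constructor <;> nlinarith

lemma sum_two_mul_remainderTerm (N n : ℕ) :
    ∑ k ∈ range n, 2 * (k : ℝ) * remainderTerm (10 ^ k) (N % 10 ^ k : ℕ) =
      -(1 / 2) * ∑ k ∈ range n, (k : ℝ) * (N % 10 ^ k : ℕ) +
        (1 / 2) * ∑ k ∈ range n, (k : ℝ) * ((N % 10 ^ k : ℕ) : ℝ) ^ 2 / 10 ^ k := by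
  rw [mul_sum, mul_sum, ← sum_add_distrib]
  refine sum_congr rfl fun k _ => ?_
  rw [remainderTerm]
  field_simp
  ring

lemma sq_sum_fract_le (n : ℕ) (x : ℕ → ℝ) : (∑ j ∈ range n, Int.fract (x j)) ^ 2 ≤ n ^ 2 := by
  refine pow_le_pow_left₀ (sum_nonneg fun j _ => Int.fract_nonneg _) ?_ 2
  simpa using sum_le_sum fun j (_ : j ∈ range n) => (Int.fract_lt_one (x j)).le

lemma sq_le_ten_pow (n : ℕ) : (n : ℝ) ^ 2 ≤ 10 ^ n := by
  have h3 : n < 3 ^ n := Nat.lt_pow_self (by norm_num)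
  have : n ^ 2 ≤ 10 ^ n := calc
    n ^ 2 ≤ (3 ^ n) ^ 2 := Nat.pow_le_pow_left h3.le 2
    _ = 9 ^ n := by rw [← pow_mul, mul_comm, pow_mul]; norm_num
    _ ≤ 10 ^ n := Nat.pow_le_pow_left (by norm_num) n
  exact_mod_cast this

theorem abs_sum_sq_sum_fract_sub_le (N n : ℕ) :
    |∑ i ∈ range N, (∑ j ∈ range n, Int.fract ((i : ℝ) / 10 ^ j)) ^ 2 -
        ((n ^ 2 / 4 - 49 * n / 108) * N +
          ∑ k ∈ range n, 2 * k * remainderTerm (10 ^ k) (N % 10 ^ k : ℕ))| ≤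
      (N : ℝ) + 7 * 10 ^ n + 2 * n ^ 2 := by
  set W : ℕ → ℕ → ℝ := fun j k =>
    ∑ i ∈ range N, Int.fract ((i : ℝ) / 10 ^ j) * Int.fract ((i : ℝ) / 10 ^ k)
  set ψ : ℕ → ℝ := fun k => remainderTerm (10 ^ k) (N % 10 ^ k : ℕ)
  set T : ℕ → ℕ → ℝ := fun j k => digitPairDensity j k * N + ψ (max j k)
  have expand : ∑ i ∈ range N, (∑ j ∈ range n, Int.fract ((i : ℝ) / 10 ^ j)) ^ 2 =
      ∑ j ∈ range n, ∑ k ∈ range n, W j k := by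
    simp only [W, sq, sum_mul_sum]
    rw [sum_comm]
    exact sum_congr rfl fun j _ => sum_comm
  have main : ∑ j ∈ range n, ∑ k ∈ range n, T j k =
      (∑ j ∈ range n, ∑ k ∈ range n, digitPairDensity j k) * N +
        ∑ k ∈ range n, (2 * k + 1) * ψ k := by
    simp only [T, sum_add_distrib, sum_sum_max, sum_mul]
  have pairs : |∑ j ∈ range n, ∑ k ∈ range n, W j k - ∑ j ∈ range n, ∑ k ∈ range n, T j k| ≤
      4 * 10 ^ n + 2 * 10 ^ n + 2 * n ^ 2 := calc
    _ = |∑ j ∈ range n, ∑ k ∈ range n, (W j k - T j k)| := by simp only [sum_sub_distrib]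
    _ ≤ ∑ j ∈ range n, ∑ k ∈ range n, |W j k - T j k| :=
      (abs_sum_le_sum_abs _ _).trans (sum_le_sum fun j _ => abs_sum_le_sum_abs _ _)
    _ ≤ ∑ j ∈ range n, ∑ k ∈ range n,
          (2 * (10 : ℝ) ^ min j k + 10 ^ Nat.dist j k + 2) :=
      sum_le_sum fun j _ => sum_le_sum fun k _ => abs_sum_fract_mul_fract_sub_le N j k
    _ = 2 * ∑ j ∈ range n, ∑ k ∈ range n, (10 : ℝ) ^ min j k +
          ∑ j ∈ range n, ∑ k ∈ range n, (10 : ℝ) ^ Nat.dist j k + 2 * n ^ 2 := by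
      simp only [sum_add_distrib, ← mul_sum, sum_const, card_range, nsmul_eq_mul]
      ring
    _ ≤ 4 * 10 ^ n + 2 * 10 ^ n + 2 * n ^ 2 := by
      linarith [sum_sum_ten_pow_min_le n, sum_sum_ten_pow_dist_le n]
  have density : |(∑ j ∈ range n, ∑ k ∈ range n, digitPairDensity j k -
      (n ^ 2 / 4 - 49 * n / 108)) * N| ≤ (N : ℝ) := by
    rw [abs_mul, Nat.abs_cast]
    exact mul_le_of_le_one_left (Nat.cast_nonneg N) (abs_sum_sum_digitPairDensity_sub_le n)
  have remainders : |∑ k ∈ range n, ψ k| ≤ 10 ^ n := calc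
    _ ≤ ∑ k ∈ range n, |ψ k| := abs_sum_le_sum_abs _ _
    _ ≤ ∑ k ∈ range n, (10 : ℝ) ^ k / 4 := sum_le_sum fun k _ => abs_remainderTerm_le
        (by positivity) (Nat.cast_nonneg _) (by exact_mod_cast (Nat.mod_lt N (by positivity)).le)
    _ ≤ 10 ^ n := by
      rw [← sum_div, sum_range_ten_pow]
      linarith [pow_pos (by norm_num : (0 : ℝ) < 10) n]
  have split : ∑ j ∈ range n, ∑ k ∈ range n, W j k -
      ((n ^ 2 / 4 - 49 * n / 108) * N + ∑ k ∈ range n, 2 * k * ψ k) =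
      (∑ j ∈ range n, ∑ k ∈ range n, W j k - ∑ j ∈ range n, ∑ k ∈ range n, T j k) +
        (∑ j ∈ range n, ∑ k ∈ range n, digitPairDensity j k - (n ^ 2 / 4 - 49 * n / 108)) * N +
        ∑ k ∈ range n, ψ k := by
    have weights : ∑ k ∈ range n, (2 * (k : ℝ) + 1) * ψ k =
        ∑ k ∈ range n, 2 * k * ψ k + ∑ k ∈ range n, ψ k := by
      rw [← sum_add_distrib]
      exact sum_congr rfl fun k _ => by ring
    rw [main, weights]
    ring
  rw [expand, split]
  refine (abs_add_three _ _ _).trans ?_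
  linarith

/-- `S_j`, the number formed by the last `j` decimal digits of `N`, equals `N % 10^j`. -/
theorem stmt4 :
    ∃ C > (0:ℝ), ∀ N : ℕ, 0 < N →
      |(∑ i ∈ Finset.range (N + 1),
          (∑ j ∈ Finset.range (Nat.digits 10 N).length, Int.fract ((i:ℝ) / 10 ^ j))^2) -
        ((((Nat.digits 10 N).length : ℝ)^2 / 4 - 49 * ((Nat.digits 10 N).length : ℝ) / 108) * (N:ℝ)
          - (1 / 2) * ∑ j ∈ Finset.range (Nat.digits 10 N).length,
              (j:ℝ) * ((N % 10 ^ j : ℕ) : ℝ)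
          + (1 / 2) * ∑ j ∈ Finset.range (Nat.digits 10 N).length,
              (j:ℝ) * ((N % 10 ^ j : ℕ) : ℝ)^2 / 10 ^ j)| ≤ C * (N:ℝ) := by
  refine ⟨101, by norm_num, fun N hN => ?_⟩
  set n := (Nat.digits 10 N).length
  have hpow : (10 : ℝ) ^ n ≤ 10 * N := by
    exact_mod_cast Nat.base_pow_length_digits_le 10 N (by norm_num) hN.ne'
  have bulk := abs_sum_sq_sum_fract_sub_le N n
  have last := sq_sum_fract_le n fun j => (N : ℝ) / 10 ^ j
  have last_nonneg := sq_nonneg (∑ j ∈ range n, Int.fract ((N : ℝ) / 10 ^ j))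
  have main := sum_two_mul_remainderTerm N n
  rw [sum_range_succ, abs_le]
  rw [abs_le] at bulk
  constructor <;> linarith [sq_le_ten_pow n]
end

section
/- Let n be a positive integer and set i₀ = 10^{n−1} − 10^{⌊n/2⌋−1} + 1. Then ∑_{j=0}^{n−1} ⟨i₀/10^j⟩ equals n/2 if n is even and (n+1)/2 if n is odd, up to an error of O(10^{−n/2}). -/
/-!
In base `B`, for `1 ≤ b ≤ a` put `N = B ^ a - B ^ b + 1`. If `1 ≤ j ≤ b` then
`N mod B ^ j = 1`, so `⟨N / B ^ j⟩ = B ^ (-j)`; if `b ≤ j ≤ a` then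
`N mod B ^ j = B ^ j - B ^ b + 1`, so `⟨N / B ^ j⟩ = 1 - (B ^ b - 1) B ^ (-j)`. Summing the two
geometric series gives exactly `(a - b) + (1 - B ^ (-b)) B ^ (-(a - b)) / (B - 1)`.
For `B = 10`, `a = n - 1`, `b = ⌊n/2⌋ - 1` the main term `a - b = ⌈n/2⌉` is the claimed value
and the error is at most `10 ^ (-⌈n/2⌉)`. When `n ≤ 3` we have `b = 0`, and the trivial
bound `n` suffices.
-/

open Finset

section Digits

variable {B a b j : ℕ}

lemma pow_sub_pow_add_one_mod_of_le (hB : 1 < B) (hj : 1 ≤ j) (hjb : j ≤ b) (hba : b ≤ a) :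
    (B ^ a - B ^ b + 1) % B ^ j = 1 := by
  refine Nat.mod_eq_of_modEq ((Nat.modEq_iff_dvd' (by omega)).2 ?_).symm
    (Nat.one_lt_pow (by omega) hB)
  rw [Nat.add_sub_cancel]
  exact Nat.dvd_sub (pow_dvd_pow B (hjb.trans hba)) (pow_dvd_pow B hjb)

lemma pow_sub_pow_add_one_mod_of_ge (hB : 1 < B) (hb : 1 ≤ b) (hbj : b ≤ j) (hja : j ≤ a) :
    (B ^ a - B ^ b + 1) % B ^ j = B ^ j - B ^ b + 1 := by
  have hBb : 1 < B ^ b := Nat.one_lt_pow (by omega) hB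
  have hbj' : B ^ b ≤ B ^ j := Nat.pow_le_pow_right (by omega) hbj
  have hja' : B ^ j ≤ B ^ a := Nat.pow_le_pow_right (by omega) hja
  refine Nat.mod_eq_of_modEq ((Nat.modEq_iff_dvd' (by omega)).2 ?_).symm (by omega)
  rw [show B ^ a - B ^ b + 1 - (B ^ j - B ^ b + 1) = B ^ a - B ^ j by omega]
  exact Nat.dvd_sub (pow_dvd_pow B hja) dvd_rfl

lemma fract_div_pow_of_le (hB : 1 < B) (hj : 1 ≤ j) (hjb : j ≤ b) (hba : b ≤ a) :
    Int.fract (((B ^ a - B ^ b + 1 : ℕ) : ℝ) / (B : ℝ) ^ j) = (B : ℝ)⁻¹ ^ j := by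
  rw [← Nat.cast_pow, Int.fract_div_natCast_eq_div_natCast_mod,
    pow_sub_pow_add_one_mod_of_le hB hj hjb hba]
  simp [inv_pow]

lemma fract_div_pow_of_ge (hB : 1 < B) (hb : 1 ≤ b) (hbj : b ≤ j) (hja : j ≤ a) :
    Int.fract (((B ^ a - B ^ b + 1 : ℕ) : ℝ) / (B : ℝ) ^ j) =
      1 - ((B : ℝ) ^ b - 1) * (B : ℝ)⁻¹ ^ j := by
  rw [← Nat.cast_pow, Int.fract_div_natCast_eq_div_natCast_mod,
    pow_sub_pow_add_one_mod_of_ge hB hb hbj hja]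
  have hB0 : (B : ℝ) ≠ 0 := by positivity
  push_cast [Nat.pow_le_pow_right (by omega : 0 < B) hbj]
  rw [inv_pow]
  field_simp
  ring

theorem sum_fract_div_pow (hB : 1 < B) (hb : 1 ≤ b) (hba : b ≤ a) :
    ∑ j ∈ range (a + 1), Int.fract (((B ^ a - B ^ b + 1 : ℕ) : ℝ) / (B : ℝ) ^ j) =
      (a - b : ℕ) + (1 - (B : ℝ)⁻¹ ^ b) * (B : ℝ)⁻¹ ^ (a - b) / (B - 1) := by
  obtain ⟨k, rfl⟩ := Nat.exists_eq_add_of_le hba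
  have hB1 : (B : ℝ)⁻¹ ≠ 1 := by
    rw [Ne, inv_eq_one]; exact_mod_cast hB.ne'
  rw [range_eq_Ico, ← sum_Ico_consecutive _ (Nat.zero_le _) (by omega : b + 1 ≤ b + k + 1),
    sum_eq_sum_Ico_succ_bot (by omega),
    sum_congr rfl fun j hj => fract_div_pow_of_le hB (mem_Ico.1 hj).1 (by grind) hba,
    sum_congr rfl fun j hj => fract_div_pow_of_ge hB hb (by grind) (by grind),
    sum_sub_distrib, sum_const, Nat.card_Ico, ← mul_sum, geom_sum_Ico' hB1 (by omega),
    geom_sum_Ico' hB1 (by omega)]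
  have hB0 : (B : ℝ) ≠ 0 := by positivity
  have hB1' : (B : ℝ) - 1 ≠ 0 := by
    rw [sub_ne_zero]; exact_mod_cast hB.ne'
  rw [show b + k + 1 - (b + 1) = k by omega]
  simp only [pow_zero, div_one, Int.fract_natCast, Nat.add_sub_cancel_left, nsmul_eq_mul,
    mul_one, zero_add, inv_pow]
  field_simp
  ring

lemma abs_sum_fract_div_pow_sub_le (hB : 1 < B) (hb : 1 ≤ b) (hba : b ≤ a) :
    |∑ j ∈ range (a + 1), Int.fract (((B ^ a - B ^ b + 1 : ℕ) : ℝ) / (B : ℝ) ^ j) -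
        (a - b : ℕ)| ≤ (B : ℝ)⁻¹ ^ (a - b) := by
  rw [sum_fract_div_pow hB hb hba, add_sub_cancel_left]
  have hB1 : (1 : ℝ) ≤ B - 1 := by
    have : (2 : ℝ) ≤ B := by exact_mod_cast hB
    linarith
  have hrb₀ : 0 ≤ (B : ℝ)⁻¹ ^ b := by positivity
  have hrb₁ : (B : ℝ)⁻¹ ^ b ≤ 1 :=
    pow_le_one₀ (by positivity) (inv_le_one_of_one_le₀ (by linarith))
  have hrb : 0 ≤ 1 - (B : ℝ)⁻¹ ^ b := by linarith
  rw [abs_of_nonneg (by positivity), div_le_iff₀ (by linarith)]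
  calc (1 - (B : ℝ)⁻¹ ^ b) * (B : ℝ)⁻¹ ^ (a - b) ≤ 1 * (B : ℝ)⁻¹ ^ (a - b) := by
        gcongr; linarith
    _ ≤ (B : ℝ)⁻¹ ^ (a - b) * (B - 1) := by
        rw [one_mul]; exact le_mul_of_one_le_right (by positivity) hB1

end Digits

lemma abs_sum_fract_sub_le (n : ℕ) (x : ℕ → ℝ) {t : ℝ} (ht₀ : 0 ≤ t) (ht : t ≤ n) :
    |∑ j ∈ range n, Int.fract (x j) - t| ≤ n := by
  have h₀ : 0 ≤ ∑ j ∈ range n, Int.fract (x j) := sum_nonneg fun j _ => Int.fract_nonneg _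
  have h₁ : ∑ j ∈ range n, Int.fract (x j) ≤ n := by
    simpa using sum_le_card_nsmul (range n) _ 1 fun j _ => (Int.fract_lt_one (x j)).le
  rw [abs_sub_le_iff]
  constructor <;> linarith

lemma ite_even_eq_sub_div_two (n : ℕ) :
    (if Even n then (n : ℝ) / 2 else ((n : ℝ) + 1) / 2) = (n - n / 2 : ℕ) := by
  rcases Nat.even_or_odd' n with ⟨k, rfl | rfl⟩
  · rw [if_pos (even_two_mul k), show 2 * k - 2 * k / 2 = k by omega]
    push_cast; ring
  · rw [if_neg (Nat.not_even_iff_odd.2 (odd_two_mul_add_one k)),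
      show 2 * k + 1 - (2 * k + 1) / 2 = k + 1 by omega]
    push_cast; ring

lemma inv_ten_pow_le_rpow {n k : ℕ} (h : n ≤ 2 * k) :
    (10 : ℝ)⁻¹ ^ k ≤ 10 ^ (-(n : ℝ) / 2) := by
  rw [inv_pow, ← Real.rpow_natCast, ← Real.rpow_neg (by norm_num)]
  apply Real.rpow_le_rpow_of_exponent_le (by norm_num)
  have : (n : ℝ) ≤ 2 * k := by exact_mod_cast h
  linarith

theorem stmt5 :
    ∃ C > (0:ℝ), ∀ n : ℕ, 2 ≤ n →
      |(∑ j ∈ Finset.range n,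
          Int.fract (((10 ^ (n - 1) - 10 ^ (n / 2 - 1) + 1 : ℕ) : ℝ) / 10 ^ j)) -
        (if Even n then (n:ℝ) / 2 else ((n:ℝ) + 1) / 2)| ≤ C * (10:ℝ) ^ (-(n:ℝ) / 2) := by
  refine ⟨3 * 10 ^ 2, by norm_num, fun n hn => ?_⟩
  rw [ite_even_eq_sub_div_two]
  by_cases hsmall : n ≤ 3
  · have hpow : (10 : ℝ)⁻¹ ^ 2 ≤ 10 ^ (-(n : ℝ) / 2) := inv_ten_pow_le_rpow (by omega)
    calc _ ≤ (n : ℝ) := abs_sum_fract_sub_le n _ (Nat.cast_nonneg _) (by norm_cast; omega)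
      _ ≤ 3 * 10 ^ 2 * (10 : ℝ)⁻¹ ^ 2 := by norm_num; exact_mod_cast hsmall
      _ ≤ _ := by gcongr
  · have key := abs_sum_fract_div_pow_sub_le (B := 10) (a := n - 1) (b := n / 2 - 1)
      (by norm_num) (by omega) (by omega)
    rw [Nat.sub_add_cancel (by omega), show n - 1 - (n / 2 - 1) = n - n / 2 by omega] at key
    simp only [Nat.cast_ofNat] at key
    calc _ ≤ (10 : ℝ)⁻¹ ^ (n - n / 2) := key
      _ ≤ 10 ^ (-(n : ℝ) / 2) := inv_ten_pow_le_rpow (by omega)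
      _ ≤ _ := le_mul_of_one_le_left (by positivity) (by norm_num)
end

section
/- Let n ≥ 2 be a positive integer and set i₀ = 10^n − 10^{⌊n/2⌋}. Then ∑_{j=0}^{n−1} ⟨i₀/10^j⟩ equals n/2 − 10/9 if n is even and n/2 − 11/18 if n is odd, up to an error of O(10^{−n/2}). -/
/-!
With `m = ⌊n/2⌋`, the number `(10^n - 10^m) / 10^j` is an integer for `j ≤ m` and an integer
minus `10^(m-j)` otherwise, so the sum is exactly `d - (1 - 10^(-d)) / 9` with `d = n - 1 - m`.
In both parities the stated main term equals `d - 1/9`, leaving the error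
`10^(-d) / 9 ≤ (10/9) · 10^(-n/2)`.
-/

open Finset

lemma sum_range_one_sub_inv_pow_succ {b : ℝ} (hb0 : b ≠ 0) (hb1 : b ≠ 1) (d : ℕ) :
    ∑ k ∈ range d, (1 - b⁻¹ ^ (k + 1)) = d - (1 - b⁻¹ ^ d) / (b - 1) := by
  have hb1' : b - 1 ≠ 0 := sub_ne_zero.mpr hb1
  induction d with
  | zero => simp
  | succ d ih =>
    rw [sum_range_succ, ih, pow_succ, inv_pow]
    field_simp
    push_cast
    ring

lemma fract_pow_sub_pow_div_pow {b m n j : ℕ} (hb : 1 < b) (hm : m ≤ n) (hj : j ≤ n) :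
    Int.fract (((b ^ n - b ^ m : ℕ) : ℝ) / (b : ℝ) ^ j) =
      if j ≤ m then 0 else 1 - (b : ℝ)⁻¹ ^ (j - m) := by
  have hb0 : (b : ℝ) ≠ 0 := by positivity
  have hpow_div {k : ℕ} (hk : j ≤ k) : (b : ℝ) ^ k / (b : ℝ) ^ j = ((b ^ (k - j) : ℕ) : ℝ) := by
    push_cast
    rw [pow_sub₀ _ hb0 hk, div_eq_mul_inv]
  rw [Nat.cast_sub (Nat.pow_le_pow_right (by omega) hm), sub_div]
  push_cast
  rw [hpow_div hj, sub_eq_add_neg, Int.fract_natCast_add]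
  split_ifs with hjm
  · rw [hpow_div hjm, Int.fract_neg_eq_zero.mpr (Int.fract_natCast _)]
  · have hx : (b : ℝ) ^ m / (b : ℝ) ^ j = (b : ℝ)⁻¹ ^ (j - m) := by
      rw [inv_pow, ← one_div, div_eq_div_iff (by positivity) (by positivity), one_mul, ← pow_add]
      congr 1
      omega
    have hx_pos : 0 < (b : ℝ)⁻¹ ^ (j - m) := by positivity
    have hx_lt_one : (b : ℝ)⁻¹ ^ (j - m) < 1 :=
      pow_lt_one₀ (by positivity) (inv_lt_one_of_one_lt₀ (by exact_mod_cast hb)) (by omega)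
    have hfract : Int.fract ((b : ℝ)⁻¹ ^ (j - m)) = (b : ℝ)⁻¹ ^ (j - m) :=
      Int.fract_eq_self.mpr ⟨hx_pos.le, hx_lt_one⟩
    rw [hx, Int.fract_neg (by rw [hfract]; exact hx_pos.ne'), hfract]

lemma sum_fract_pow_sub_pow_div_pow {b m n : ℕ} (hb : 1 < b) (hmn : m < n) :
    ∑ j ∈ range n, Int.fract (((b ^ n - b ^ m : ℕ) : ℝ) / (b : ℝ) ^ j) =
      ((n - 1 - m : ℕ) : ℝ) - (1 - (b : ℝ)⁻¹ ^ (n - 1 - m)) / (b - 1) := by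
  obtain ⟨d, rfl⟩ : ∃ d, n = m + 1 + d := ⟨n - (m + 1), by omega⟩
  have hd : m + 1 + d - 1 - m = d := by omega
  rw [sum_congr rfl fun j hj => fract_pow_sub_pow_div_pow hb (by omega) (mem_range.mp hj).le,
    sum_range_add, hd, sum_eq_zero fun j hj => if_pos (by simp at hj; omega), zero_add,
    ← sum_range_one_sub_inv_pow_succ (by positivity) (by exact_mod_cast hb.ne')]
  refine sum_congr rfl fun k _ => ?_
  rw [if_neg (by omega), show m + 1 + k - m = k + 1 by omega]

lemma ite_even_eq_natCast_sub_one_ninth {n : ℕ} (hn : n ≠ 0) :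
    (if Even n then (n : ℝ) / 2 - 10 / 9 else (n : ℝ) / 2 - 11 / 18) =
      ((n - 1 - n / 2 : ℕ) : ℝ) - 1 / 9 := by
  rcases Nat.even_or_odd' n with ⟨k, rfl | rfl⟩
  · rw [if_pos (even_two_mul k), show 2 * k - 1 - 2 * k / 2 = k - 1 by omega,
      Nat.cast_sub (by omega)]
    push_cast
    ring
  · rw [if_neg (Nat.not_even_iff_odd.mpr (odd_two_mul_add_one k)),
      show 2 * k + 1 - 1 - (2 * k + 1) / 2 = k by omega]
    push_cast
    ring

lemma inv_pow_sub_one_sub_half_le {b : ℝ} (hb : 1 ≤ b) (n : ℕ) :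
    b⁻¹ ^ (n - 1 - n / 2) ≤ b * b ^ (-(n : ℝ) / 2) := by
  have hb0 : 0 < b := by linarith
  have hexp : (n : ℝ) / 2 - 1 ≤ ((n - 1 - n / 2 : ℕ) : ℝ) := by
    have : n ≤ 2 * (n - 1 - n / 2) + 2 := by omega
    have : (n : ℝ) ≤ 2 * ((n - 1 - n / 2 : ℕ) : ℝ) + 2 := by exact_mod_cast this
    linarith
  calc b⁻¹ ^ (n - 1 - n / 2) = b ^ (-((n - 1 - n / 2 : ℕ) : ℝ)) := by
        rw [Real.rpow_neg hb0.le, Real.rpow_natCast, inv_pow]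
    _ ≤ b ^ (1 + -(n : ℝ) / 2) := Real.rpow_le_rpow_of_exponent_le hb (by linarith)
    _ = b * b ^ (-(n : ℝ) / 2) := by rw [Real.rpow_add hb0, Real.rpow_one]

theorem stmt6 :
    ∃ C > (0:ℝ), ∀ n : ℕ, 2 ≤ n →
      |(∑ j ∈ Finset.range n,
          Int.fract (((10 ^ n - 10 ^ (n / 2) : ℕ) : ℝ) / 10 ^ j)) -
        (if Even n then (n:ℝ) / 2 - 10 / 9 else (n:ℝ) / 2 - 11 / 18)|
        ≤ C * (10:ℝ) ^ (-(n:ℝ) / 2) := by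
  refine ⟨10 / 9, by norm_num, fun n hn => ?_⟩
  have hsum := sum_fract_pow_sub_pow_div_pow (b := 10) (m := n / 2) (n := n) (by norm_num) (by omega)
  simp only [Nat.cast_ofNat] at hsum
  rw [hsum, ite_even_eq_natCast_sub_one_ninth (by omega)]
  set d := n - 1 - n / 2
  calc |(d : ℝ) - (1 - (10 : ℝ)⁻¹ ^ d) / (10 - 1) - (d - 1 / 9)| = (10 : ℝ)⁻¹ ^ d / 9 := by
        rw [← abs_of_pos (by positivity : (0 : ℝ) < (10 : ℝ)⁻¹ ^ d / 9)]
        congr 1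
        ring
    _ ≤ 10 * (10 : ℝ) ^ (-(n : ℝ) / 2) / 9 := by
        gcongr
        exact inv_pow_sub_one_sub_half_le (by norm_num) n
    _ = 10 / 9 * (10 : ℝ) ^ (-(n : ℝ) / 2) := by ring
end

section
/- Let N be a positive integer with n decimal digits, and choose i₀ = 10^{n−1} − 10^{⌊n/2⌋−1} + 1 if N ≤ 10^n − 10^{⌊n/2⌋}, and i₀ = 10^n − 10^{⌊n/2⌋} otherwise. Then ∑_{i=0}^{N} ( ∑_{j=0}^{n−1} [⟨i/10^j⟩ − ⟨i₀/10^j⟩] )² = (11/108)·n·N + O(N). -/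
open Finset

/-- digit sum of the lowest `n` digits -/
def ds (n i : ℕ) : ℕ := ∑ l ∈ Finset.range n, i / 10^l % 10

lemma sum_blocks0 (f : ℕ → ℝ) (P t : ℕ) :
    ∑ i ∈ range (t*P), f i = ∑ b ∈ range t, ∑ a ∈ range P, f (b*P + a) := by
  induction t with
  | zero => simp
  | succ t ih =>
      have h : (t+1)*P = t*P + P := by ring
      rw [h, Finset.sum_range_add, ih, Finset.sum_range_succ]

lemma sum_blocks (f : ℕ → ℝ) (P t r : ℕ) :
    ∑ i ∈ range (t*P + r), f i
      = ∑ b ∈ range t, ∑ a ∈ range P, f (b*P + a) + ∑ a ∈ range r, f (t*P + a) := by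
  rw [Finset.sum_range_add, sum_blocks0]

lemma ds_block {n b i : ℕ} (hb : b ≤ 9) (hi : i < 10^n) :
    ds (n+1) (b*10^n + i) = b + ds n i := by
  unfold ds
  rw [Finset.sum_range_succ]
  have hlast : (b*10^n + i) / 10^n % 10 = b := by
    have : (b*10^n + i) / 10^n = b + i / 10^n := by
      rw [mul_comm, Nat.mul_add_div (by positivity)]
    rw [this, Nat.div_eq_of_lt hi, Nat.add_zero, Nat.mod_eq_of_lt (by omega)]
  rw [hlast]
  have hrest : ∀ l ∈ range n, (b*10^n + i) / 10^l % 10 = i / 10^l % 10 := by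
    intro l hl
    rw [Finset.mem_range] at hl
    have hd : (b*10^n + i) / 10^l = b*10^(n-l) + i / 10^l := by
      have h1 : b*10^n = 10^l * (b*10^(n-l)) := by
        have hp : 10^n = 10^l * 10^(n-l) := by rw [← pow_add]; congr 1; omega
        rw [hp]; ring
      rw [h1, Nat.mul_add_div (by positivity)]
    rw [hd]
    have h2 : b*10^(n-l) = b*10^(n-l-1)*10 := by
      rw [mul_assoc, ← pow_succ]; congr 2; omega
    rw [h2]
    omega
  rw [Finset.sum_congr rfl hrest]
  ring

noncomputable def X (n i : ℕ) : ℝ := (ds n i : ℝ) - 9/2*n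

lemma sumId (n : ℕ) : ∑ i ∈ range n, (i:ℝ) = n*(n-1)/2 := by
  induction n with
  | zero => simp
  | succ n ih => rw [Finset.sum_range_succ, ih]; push_cast; ring

lemma X_block {n b i : ℕ} (hb : b ≤ 9) (hi : i < 10^n) :
    X (n+1) (b*10^n + i) = ((b:ℝ) - 9/2) + X n i := by
  unfold X
  rw [ds_block hb hi]
  push_cast; ring

lemma E1 (n : ℕ) : ∑ i ∈ range (10^n), X n i = 0 := by
  induction n with
  | zero => simp [X, ds]
  | succ n ih =>
      have h10 : 10^(n+1) = 10*10^n := by ring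
      rw [h10, sum_blocks0]
      have hb : ∀ b ∈ range 10, ∑ a ∈ range (10^n), X (n+1) (b*10^n + a)
          = 10^n * ((b:ℝ) - 9/2) := by
        intro b hb
        rw [Finset.mem_range] at hb
        have : ∀ a ∈ range (10^n), X (n+1) (b*10^n + a) = ((b:ℝ) - 9/2) + X n a := by
          intro a ha; rw [Finset.mem_range] at ha
          exact X_block (by omega) ha
        rw [Finset.sum_congr rfl this, Finset.sum_add_distrib, ih, Finset.sum_const]
        simp only [Finset.card_range, nsmul_eq_mul, add_zero]
        push_cast; ring
      rw [Finset.sum_congr rfl hb]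
      have : ∑ b ∈ range 10, ((10:ℝ)^n * ((b:ℝ) - 9/2)) = 10^n * (∑ b ∈ range 10, ((b:ℝ) - 9/2)) := by
        rw [Finset.mul_sum]
      rw [this]
      have : ∑ b ∈ range 10, ((b:ℝ) - 9/2) = 0 := by
        norm_num [Finset.sum_range_succ]
      rw [this, mul_zero]

lemma E2 (n : ℕ) : ∑ i ∈ range (10^n), (X n i)^2 = 33/4*n*10^n := by
  induction n with
  | zero => simp [X, ds]
  | succ n ih =>
      have h10 : 10^(n+1) = 10*10^n := by ring
      rw [h10, sum_blocks0]
      have hb : ∀ b ∈ range 10, ∑ a ∈ range (10^n), (X (n+1) (b*10^n + a))^2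
          = 10^n * ((b:ℝ) - 9/2)^2 + 33/4*n*10^n := by
        intro b hb
        rw [Finset.mem_range] at hb
        have : ∀ a ∈ range (10^n), (X (n+1) (b*10^n + a))^2
            = ((b:ℝ) - 9/2)^2 + 2*((b:ℝ)-9/2) * X n a + (X n a)^2 := by
          intro a ha; rw [Finset.mem_range] at ha
          rw [X_block (by omega) ha]; ring
        rw [Finset.sum_congr rfl this]
        rw [Finset.sum_add_distrib, Finset.sum_add_distrib, ih, Finset.sum_const,
          ← Finset.mul_sum, E1]
        simp only [Finset.card_range, nsmul_eq_mul, mul_zero, add_zero]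
        push_cast; ring
      rw [Finset.sum_congr rfl hb]
      rw [Finset.sum_add_distrib, Finset.sum_const, ← Finset.mul_sum]
      have : ∑ b ∈ range 10, ((b:ℝ) - 9/2)^2 = 165/2 := by
        norm_num [Finset.sum_range_succ]
      rw [this]
      simp only [Finset.card_range, nsmul_eq_mul]
      push_cast; ring

lemma decomp (P R : ℕ) (hP : 0 < P) (hR : R ≤ 10*P) :
    ∃ t r, t ≤ 9 ∧ r ≤ P ∧ R = t*P + r := by
  rcases le_total (9*P) R with h | h
  · exact ⟨9, R - 9*P, le_refl _, by omega, by omega⟩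
  · refine ⟨R/P, R%P, ?_, le_of_lt (Nat.mod_lt _ hP), (Nat.div_add_mod' R P).symm⟩
    calc R/P ≤ 9*P/P := Nat.div_le_div_right h
    _ = 9 := Nat.mul_div_cancel 9 hP |>.symm ▸ rfl

lemma cut1 (t : ℕ) (ht : t ≤ 9) : |∑ b ∈ range t, ((b:ℝ) - 9/2)| ≤ 25/2 := by
  interval_cases t <;> norm_num [Finset.sum_range_succ, abs_le]

lemma cut2 (t : ℕ) (ht : t ≤ 9) : |∑ b ∈ range t, (((b:ℝ) - 9/2)^2 - 33/4)| ≤ 16 := by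
  interval_cases t <;> norm_num [Finset.sum_range_succ, abs_le]

lemma cut3 (t : ℕ) (ht : t ≤ 9) : |∑ b ∈ range t, (((b:ℝ) - 9/2)*(b:ℝ))| ≤ 83 := by
  interval_cases t <;> norm_num [Finset.sum_range_succ, abs_le]

lemma tbound (t : ℕ) (ht : t ≤ 9) : |(t:ℝ) - 9/2| ≤ 9/2 := by
  have h1 : (t:ℝ) ≤ 9 := by exact_mod_cast ht
  have h2 : (0:ℝ) ≤ t := Nat.cast_nonneg t
  rw [abs_le]; constructor <;> linarith

lemma L1_s8 (n : ℕ) : ∀ R ≤ 10^n, |∑ i ∈ range R, X n i| ≤ 2*10^n := by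
  induction n with
  | zero =>
      intro R hR
      interval_cases R <;> norm_num [X, ds]
  | succ n ih =>
      intro R hR
      obtain ⟨t, r, ht, hr, hRe⟩ := decomp (10^n) R (by positivity) (by rw [← pow_succ']; exact hR)
      subst hRe
      rw [sum_blocks]
      have hblocks : ∑ b ∈ range t, ∑ a ∈ range (10^n), X (n+1) (b*10^n+a)
          = 10^n * ∑ b ∈ range t, ((b:ℝ)-9/2) := by
        rw [Finset.mul_sum]
        refine Finset.sum_congr rfl fun b hb => ?_
        rw [Finset.mem_range] at hb
        have : ∀ a ∈ range (10^n), X (n+1) (b*10^n+a) = ((b:ℝ)-9/2) + X n a := fun a ha =>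
          X_block (by omega) (Finset.mem_range.mp ha)
        rw [Finset.sum_congr rfl this, Finset.sum_add_distrib, E1, Finset.sum_const]
        simp only [Finset.card_range, nsmul_eq_mul, add_zero]; push_cast; ring
      have hrem : ∑ a ∈ range r, X (n+1) (t*10^n+a)
          = r*((t:ℝ)-9/2) + ∑ a ∈ range r, X n a := by
        have : ∀ a ∈ range r, X (n+1) (t*10^n+a) = ((t:ℝ)-9/2) + X n a := fun a ha =>
          X_block ht (by have := Finset.mem_range.mp ha; omega)
        rw [Finset.sum_congr rfl this, Finset.sum_add_distrib, Finset.sum_const]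
        simp only [Finset.card_range, nsmul_eq_mul]
      rw [hblocks, hrem]
      have e1 : |(10:ℝ)^n * ∑ b ∈ range t, ((b:ℝ)-9/2)| ≤ 10^n * (25/2) := by
        rw [abs_mul, abs_of_nonneg (by positivity : (0:ℝ) ≤ (10:ℝ)^n)]
        exact mul_le_mul_of_nonneg_left (cut1 t ht) (by positivity)
      have e2 : |(r:ℝ)*((t:ℝ)-9/2)| ≤ 10^n * (9/2) := by
        rw [abs_mul, abs_of_nonneg (Nat.cast_nonneg r)]
        have hrc : (r:ℝ) ≤ 10^n := by exact_mod_cast hr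
        have := tbound t ht
        nlinarith [abs_nonneg ((t:ℝ)-9/2), (Nat.cast_nonneg r : (0:ℝ) ≤ (r:ℝ))]
      have e3 : |∑ a ∈ range r, X n a| ≤ 2*10^n := ih r hr
      have htot := abs_add_le (10^n * ∑ b ∈ range t, ((b:ℝ)-9/2))
        ((r:ℝ)*((t:ℝ)-9/2) + ∑ a ∈ range r, X n a)
      have htot2 := abs_add_le ((r:ℝ)*((t:ℝ)-9/2)) (∑ a ∈ range r, X n a)
      have : (10:ℝ)^(n+1) = 10*10^n := by ring
      rw [this]
      have hp : (0:ℝ) < 10^n := by positivity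
      linarith

lemma cutsq (t : ℕ) (ht : t ≤ 9) : |((t:ℝ)-9/2)^2 - 33/4| ≤ 12 := by
  interval_cases t <;> norm_num [abs_le]

lemma L2_s8 (n : ℕ) : ∀ R ≤ 10^n, |∑ i ∈ range R, (X n i)^2 - 33/4*n*R| ≤ 7*10^n := by
  induction n with
  | zero =>
      intro R hR
      interval_cases R <;> norm_num [X, ds]
  | succ n ih =>
      intro R hR
      obtain ⟨t, r, ht, hr, hRe⟩ := decomp (10^n) R (by positivity) (by rw [← pow_succ']; exact hR)
      subst hRe
      rw [sum_blocks]
      have hblocks : ∑ b ∈ range t, ∑ a ∈ range (10^n), (X (n+1) (b*10^n+a))^2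
          = 10^n * ∑ b ∈ range t, ((b:ℝ)-9/2)^2 + t*(33/4*n*10^n) := by
        have hb1 : ∀ b ∈ range t, ∑ a ∈ range (10^n), (X (n+1) (b*10^n+a))^2
            = 10^n * ((b:ℝ)-9/2)^2 + 33/4*n*10^n := by
          intro b hb
          rw [Finset.mem_range] at hb
          have : ∀ a ∈ range (10^n), (X (n+1) (b*10^n+a))^2
              = ((b:ℝ)-9/2)^2 + 2*((b:ℝ)-9/2)*X n a + (X n a)^2 := by
            intro a ha
            rw [X_block (by omega) (Finset.mem_range.mp ha)]; ring
          rw [Finset.sum_congr rfl this, Finset.sum_add_distrib, Finset.sum_add_distrib,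
            E2, ← Finset.mul_sum, E1, Finset.sum_const]
          simp only [Finset.card_range, nsmul_eq_mul, mul_zero, add_zero]
          push_cast; ring
        rw [Finset.sum_congr rfl hb1, Finset.sum_add_distrib, Finset.sum_const,
          ← Finset.mul_sum]
        simp only [Finset.card_range, nsmul_eq_mul]
      have hrem : ∑ a ∈ range r, (X (n+1) (t*10^n+a))^2
          = r*((t:ℝ)-9/2)^2 + 2*((t:ℝ)-9/2)*(∑ a ∈ range r, X n a)
            + ∑ a ∈ range r, (X n a)^2 := by
        have : ∀ a ∈ range r, (X (n+1) (t*10^n+a))^2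
            = ((t:ℝ)-9/2)^2 + 2*((t:ℝ)-9/2)*X n a + (X n a)^2 := by
          intro a ha
          rw [X_block ht (by have := Finset.mem_range.mp ha; omega)]; ring
        rw [Finset.sum_congr rfl this, Finset.sum_add_distrib, Finset.sum_add_distrib,
          ← Finset.mul_sum, Finset.sum_const]
        simp only [Finset.card_range, nsmul_eq_mul]
      rw [hblocks, hrem]
      -- identity
      have hid : 10^n * ∑ b ∈ range t, ((b:ℝ)-9/2)^2 + t*(33/4*n*10^n)
          + (r*((t:ℝ)-9/2)^2 + 2*((t:ℝ)-9/2)*(∑ a ∈ range r, X n a)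
            + ∑ a ∈ range r, (X n a)^2) - 33/4*(n+1)*((t*10^n+r : ℕ):ℝ)
          = 10^n * (∑ b ∈ range t, (((b:ℝ)-9/2)^2 - 33/4))
            + (r:ℝ)*(((t:ℝ)-9/2)^2 - 33/4)
            + 2*((t:ℝ)-9/2)*(∑ a ∈ range r, X n a)
            + (∑ a ∈ range r, (X n a)^2 - 33/4*n*r) := by
        rw [Finset.sum_sub_distrib, Finset.sum_const]
        simp only [Finset.card_range, nsmul_eq_mul]
        push_cast; ring
      have hc : ((n+1:ℕ):ℝ) = (n:ℝ)+1 := by push_cast; ring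
      rw [hc, hid]
      have e1 : |(10:ℝ)^n * ∑ b ∈ range t, (((b:ℝ)-9/2)^2 - 33/4)| ≤ 10^n * 16 := by
        rw [abs_mul, abs_of_nonneg (by positivity : (0:ℝ) ≤ (10:ℝ)^n)]
        exact mul_le_mul_of_nonneg_left (cut2 t ht) (by positivity)
      have e2 : |(r:ℝ)*(((t:ℝ)-9/2)^2 - 33/4)| ≤ 10^n * 12 := by
        rw [abs_mul, abs_of_nonneg (Nat.cast_nonneg r)]
        have hrc : (r:ℝ) ≤ 10^n := by exact_mod_cast hr
        have := cutsq t ht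
        nlinarith [abs_nonneg (((t:ℝ)-9/2)^2 - 33/4), (Nat.cast_nonneg r : (0:ℝ) ≤ (r:ℝ))]
      have e3 : |2*((t:ℝ)-9/2)*(∑ a ∈ range r, X n a)| ≤ 9 * (2*10^n) := by
        rw [abs_mul, abs_mul]
        have h1 := tbound t ht
        have h2 := L1_s8 n r hr
        have h3 : |(2:ℝ)| = 2 := by norm_num
        rw [h3]
        have := abs_nonneg (∑ a ∈ range r, X n a)
        have := abs_nonneg ((t:ℝ)-9/2)
        nlinarith
      have e4 : |∑ a ∈ range r, (X n a)^2 - 33/4*n*r| ≤ 7*10^n := ih r hr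
      have htot := abs_add_le (10^n * (∑ b ∈ range t, (((b:ℝ)-9/2)^2 - 33/4))
            + (r:ℝ)*(((t:ℝ)-9/2)^2 - 33/4)
            + 2*((t:ℝ)-9/2)*(∑ a ∈ range r, X n a))
        (∑ a ∈ range r, (X n a)^2 - 33/4*n*r)
      have htot2 := abs_add_le (10^n * (∑ b ∈ range t, (((b:ℝ)-9/2)^2 - 33/4))
            + (r:ℝ)*(((t:ℝ)-9/2)^2 - 33/4))
        (2*((t:ℝ)-9/2)*(∑ a ∈ range r, X n a))
      have htot3 := abs_add_le (10^n * (∑ b ∈ range t, (((b:ℝ)-9/2)^2 - 33/4)))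
        ((r:ℝ)*(((t:ℝ)-9/2)^2 - 33/4))
      have hp : (0:ℝ) < 10^n := by positivity
      have : (10:ℝ)^(n+1) = 10*10^n := by ring
      rw [this]
      linarith

set_option maxHeartbeats 1000000 in
lemma L3 (n : ℕ) : ∀ R ≤ 10^n, |∑ i ∈ range R, X n i * (i:ℝ)| ≤ 2*100^n := by
  induction n with
  | zero =>
      intro R hR
      interval_cases R <;> norm_num [X, ds]
  | succ n ih =>
      intro R hR
      obtain ⟨t, r, ht, hr, hRe⟩ := decomp (10^n) R (by positivity) (by rw [← pow_succ']; exact hR)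
      subst hRe
      rw [sum_blocks]
      set P : ℝ := (10:ℝ)^n with hP
      have hPpos : (0:ℝ) < P := by positivity
      have hP1 : (1:ℝ) ≤ P := by rw [hP]; exact_mod_cast Nat.one_le_pow n 10 (by norm_num)
      have hcast : ∀ b a : ℕ, ((b*10^n + a : ℕ):ℝ) = (b:ℝ)*P + (a:ℝ) := by
        intro b a; push_cast; ring
      have hblocks : ∑ b ∈ range t, ∑ a ∈ range (10^n), X (n+1) (b*10^n+a) * ((b*10^n+a : ℕ):ℝ)
          = P*P*(∑ b ∈ range t, (((b:ℝ)-9/2)*(b:ℝ))) + (P*(P-1)/2)*(∑ b ∈ range t, ((b:ℝ)-9/2))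
            + t*(∑ a ∈ range (10^n), X n a * (a:ℝ)) := by
        have hb1 : ∀ b ∈ range t, ∑ a ∈ range (10^n), X (n+1) (b*10^n+a) * ((b*10^n+a : ℕ):ℝ)
            = P*P*(((b:ℝ)-9/2)*(b:ℝ)) + (P*(P-1)/2)*((b:ℝ)-9/2)
              + ∑ a ∈ range (10^n), X n a * (a:ℝ) := by
          intro b hb
          rw [Finset.mem_range] at hb
          have hsummand : ∀ a ∈ range (10^n), X (n+1) (b*10^n+a) * ((b*10^n+a : ℕ):ℝ)
              = (((b:ℝ)-9/2)*((b:ℝ)*P)) + (((b:ℝ)-9/2))*(a:ℝ)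
                + X n a * ((b:ℝ)*P) + X n a * (a:ℝ) := by
            intro a ha
            rw [X_block (by omega) (Finset.mem_range.mp ha), hcast]; ring
          rw [Finset.sum_congr rfl hsummand]
          rw [Finset.sum_add_distrib, Finset.sum_add_distrib, Finset.sum_add_distrib,
            Finset.sum_const, ← Finset.mul_sum, ← Finset.sum_mul, E1, sumId]
          simp only [Finset.card_range, nsmul_eq_mul, zero_mul, add_zero]
          push_cast; ring
        rw [Finset.sum_congr rfl hb1, Finset.sum_add_distrib, Finset.sum_add_distrib,
          ← Finset.mul_sum, ← Finset.mul_sum, Finset.sum_const]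
        simp only [Finset.card_range, nsmul_eq_mul]
      have hrem : ∑ a ∈ range r, X (n+1) (t*10^n+a) * ((t*10^n+a : ℕ):ℝ)
          = ((t:ℝ)-9/2)*((t:ℝ)*P*(r:ℝ) + (r:ℝ)*((r:ℝ)-1)/2)
            + (t:ℝ)*P*(∑ a ∈ range r, X n a) + ∑ a ∈ range r, X n a * (a:ℝ) := by
        have hsummand : ∀ a ∈ range r, X (n+1) (t*10^n+a) * ((t*10^n+a : ℕ):ℝ)
            = (((t:ℝ)-9/2)*((t:ℝ)*P)) + (((t:ℝ)-9/2))*(a:ℝ)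
              + X n a * ((t:ℝ)*P) + X n a * (a:ℝ) := by
          intro a ha
          rw [X_block ht (by have := Finset.mem_range.mp ha; omega), hcast]; ring
        rw [Finset.sum_congr rfl hsummand]
        rw [Finset.sum_add_distrib, Finset.sum_add_distrib, Finset.sum_add_distrib,
          Finset.sum_const, ← Finset.mul_sum, ← Finset.sum_mul, sumId]
        simp only [Finset.card_range, nsmul_eq_mul]
        ring
      rw [hblocks, hrem]
      -- bounds
      have e1 : |P*P*(∑ b ∈ range t, (((b:ℝ)-9/2)*(b:ℝ)))| ≤ P*P*83 := by
        rw [abs_mul, abs_of_nonneg (by positivity : (0:ℝ) ≤ P*P)]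
        exact mul_le_mul_of_nonneg_left (cut3 t ht) (by positivity)
      have e2 : |(P*(P-1)/2)*(∑ b ∈ range t, ((b:ℝ)-9/2))| ≤ P*P*(25/4) := by
        rw [abs_mul]
        have h1 : |P*(P-1)/2| ≤ P*P/2 := by
          rw [abs_of_nonneg (by nlinarith : (0:ℝ) ≤ P*(P-1)/2)]
          nlinarith
        have h2 := cut1 t ht
        have := abs_nonneg (∑ b ∈ range t, ((b:ℝ)-9/2))
        nlinarith
      have e3 : |(t:ℝ)*(∑ a ∈ range (10^n), X n a * (a:ℝ))| ≤ 9*(2*100^n) := by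
        rw [abs_mul]
        have h1 : |(t:ℝ)| ≤ 9 := by
          rw [abs_of_nonneg (Nat.cast_nonneg t)]; exact_mod_cast ht
        have h2 := ih (10^n) (le_refl _)
        have := abs_nonneg (∑ a ∈ range (10^n), X n a * (a:ℝ))
        nlinarith
      have e4 : |((t:ℝ)-9/2)*((t:ℝ)*P*(r:ℝ) + (r:ℝ)*((r:ℝ)-1)/2)| ≤ (9/2)*(9*P*P + P*P/2) := by
        rw [abs_mul]
        have h1 := tbound t ht
        have hrc : (r:ℝ) ≤ P := by rw [hP]; exact_mod_cast hr
        have hrn : (0:ℝ) ≤ (r:ℝ) := Nat.cast_nonneg r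
        have htc : (t:ℝ) ≤ 9 := by exact_mod_cast ht
        have htn : (0:ℝ) ≤ (t:ℝ) := Nat.cast_nonneg t
        have a1 : (t:ℝ)*P ≤ 9*P := by nlinarith
        have a2 : (t:ℝ)*P*(r:ℝ) ≤ 9*P*(r:ℝ) := mul_le_mul_of_nonneg_right a1 hrn
        have a3 : 9*P*(r:ℝ) ≤ 9*P*P := by
          nlinarith [mul_le_mul_of_nonneg_left hrc (show (0:ℝ) ≤ 9*P by positivity)]
        have a4 : (r:ℝ)*((r:ℝ)-1) ≤ P*P := by nlinarith [mul_self_le_mul_self hrn hrc]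
        have a5 : -(P*P) ≤ (r:ℝ)*((r:ℝ)-1) := by nlinarith [sq_nonneg ((r:ℝ)-1/2), hP1]
        have a6 : (0:ℝ) ≤ (t:ℝ)*P*(r:ℝ) := by positivity
        have h2 : |(t:ℝ)*P*(r:ℝ) + (r:ℝ)*((r:ℝ)-1)/2| ≤ 9*P*P + P*P/2 := by
          rw [abs_le]; constructor <;> linarith
        have := abs_nonneg ((t:ℝ)*P*(r:ℝ) + (r:ℝ)*((r:ℝ)-1)/2)
        nlinarith
      have e5 : |(t:ℝ)*P*(∑ a ∈ range r, X n a)| ≤ 9*P*(2*P) := by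
        rw [abs_mul]
        have h2 := L1_s8 n r hr
        have h1 : |(t:ℝ)*P| ≤ 9*P := by
          rw [abs_mul, abs_of_nonneg (Nat.cast_nonneg t), abs_of_nonneg (le_of_lt hPpos)]
          have htc : (t:ℝ) ≤ 9 := by exact_mod_cast ht
          nlinarith
        have := abs_nonneg (∑ a ∈ range r, X n a)
        have := abs_nonneg ((t:ℝ)*P)
        rw [hP] at *
        nlinarith
      have e6 : |∑ a ∈ range r, X n a * (a:ℝ)| ≤ 2*100^n := ih r hr
      have h100 : (100:ℝ)^n = P*P := by
        rw [hP, show (100:ℝ) = 10*10 by norm_num, mul_pow]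
      have h100' : (100:ℝ)^(n+1) = 100*(P*P) := by
        rw [pow_succ, h100]; ring
      have g1 := abs_add_le
        (P*P*(∑ b ∈ range t, (((b:ℝ)-9/2)*(b:ℝ))) + (P*(P-1)/2)*(∑ b ∈ range t, ((b:ℝ)-9/2))
          + (t:ℝ)*(∑ a ∈ range (10^n), X n a * (a:ℝ)))
        (((t:ℝ)-9/2)*((t:ℝ)*P*(r:ℝ) + (r:ℝ)*((r:ℝ)-1)/2)
          + (t:ℝ)*P*(∑ a ∈ range r, X n a) + ∑ a ∈ range r, X n a * (a:ℝ))
      have g2 := abs_add_le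
        (P*P*(∑ b ∈ range t, (((b:ℝ)-9/2)*(b:ℝ))) + (P*(P-1)/2)*(∑ b ∈ range t, ((b:ℝ)-9/2)))
        ((t:ℝ)*(∑ a ∈ range (10^n), X n a * (a:ℝ)))
      have g3 := abs_add_le (P*P*(∑ b ∈ range t, (((b:ℝ)-9/2)*(b:ℝ))))
        ((P*(P-1)/2)*(∑ b ∈ range t, ((b:ℝ)-9/2)))
      have g4 := abs_add_le
        (((t:ℝ)-9/2)*((t:ℝ)*P*(r:ℝ) + (r:ℝ)*((r:ℝ)-1)/2)
          + (t:ℝ)*P*(∑ a ∈ range r, X n a))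
        (∑ a ∈ range r, X n a * (a:ℝ))
      have g5 := abs_add_le (((t:ℝ)-9/2)*((t:ℝ)*P*(r:ℝ) + (r:ℝ)*((r:ℝ)-1)/2))
        ((t:ℝ)*P*(∑ a ∈ range r, X n a))
      rw [h100] at e3 e6
      rw [h100']
      have hPP : (0:ℝ) ≤ P*P := by positivity
      linarith
lemma fract_nat_div (i j : ℕ) : Int.fract ((i:ℝ)/(10^j)) = ((i % 10^j : ℕ):ℝ)/10^j := by
  have h10 : (0:ℝ) < 10^j := by positivity
  have hq : ((10^j * (i / 10^j) : ℕ):ℝ) / 10^j = ((i / 10^j : ℕ):ℝ) := by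
    push_cast; field_simp
  have hi : (i:ℝ) = ((10^j * (i / 10^j) : ℕ):ℝ) + ((i % 10^j : ℕ):ℝ) := by
    rw [← Nat.cast_add, Nat.div_add_mod]
  rw [hi, add_div, hq, Int.fract_natCast_add, Int.fract_eq_self.mpr]
  constructor
  · positivity
  · rw [div_lt_one h10]
    exact_mod_cast Nat.mod_lt _ (by positivity)

lemma ID (i : ℕ) : ∀ n, 9 * ∑ j ∈ range n, ((i % 10^j : ℕ):ℝ)/10^j
    = (ds n i : ℝ) - ((i % 10^n : ℕ):ℝ)/10^(n-1) := by
  intro n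
  induction n with
  | zero => simp [ds, Nat.mod_one]
  | succ n ih =>
      rw [Finset.sum_range_succ, mul_add, ih]
      unfold ds
      rw [Finset.sum_range_succ]
      have hsplit : (i % 10^(n+1) : ℕ) = i % 10^n + 10^n * (i / 10^n % 10) := by
        have : (10:ℕ)^(n+1) = 10^n * 10 := by ring
        rw [this, Nat.mod_mul]
      rcases Nat.eq_zero_or_pos n with hn | hn
      · subst hn
        rw [hsplit]
        simp [ds, Nat.mod_one]
      · have hpow : (10:ℝ)^n = 10*10^(n-1) := by
          rw [← pow_succ']; congr 1; omega
        have hnn : n + 1 - 1 = n := by omega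
        rw [hnn, hsplit]
        push_cast
        rw [hpow]
        have h9 : (0:ℝ) < (10:ℝ)^(n-1) := by positivity
        field_simp
        ring

lemma pow_le_pow10 {a b : ℕ} (h : a ≤ b) : (10:ℕ)^a ≤ 10^b :=
  Nat.pow_le_pow_right (by norm_num) h

lemma D1 {n m l : ℕ} (hml : m ≤ l) (hln : l < n) :
    (10^n - 10^m) / 10^l % 10 = 9 := by
  have h1 : (10:ℕ)^l * (10^(n-l) - 1) = 10^n - 10^l := by
    rw [Nat.mul_sub, mul_one, ← pow_add]
    congr 2; omega
  have h2 : (10:ℕ)^m ≤ 10^l := pow_le_pow10 hml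
  have h3 : (10:ℕ)^l ≤ 10^n := pow_le_pow10 (by omega)
  have h0 : 1 ≤ (10:ℕ)^m := Nat.one_le_pow _ _ (by norm_num)
  have h4 : 10^n - 10^m = 10^l * (10^(n-l) - 1) + (10^l - 10^m) := by omega
  rw [h4, Nat.mul_add_div (by positivity), Nat.div_eq_of_lt (by omega), Nat.add_zero]
  have h5 : (10:ℕ)^(n-l) = 10 * 10^(n-l-1) := by
    rw [← pow_succ']; congr 1; omega
  have h6 : 1 ≤ (10:ℕ)^(n-l-1) := Nat.one_le_pow _ _ (by norm_num)
  omega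

lemma D2 {n m l : ℕ} (hlm : l < m) (hmn : m ≤ n) :
    (10^n - 10^m) / 10^l % 10 = 0 := by
  have h1 : (10:ℕ)^n - 10^m = 10^l * (10^(n-l) - 10^(m-l)) := by
    rw [Nat.mul_sub, ← pow_add, ← pow_add]
    congr 2 <;> omega
  rw [h1, Nat.mul_div_cancel_left _ (by positivity : 0 < (10:ℕ)^l)]
  have h5 : (10:ℕ)^(n-l) = 10 * 10^(n-l-1) := by rw [← pow_succ']; congr 1; omega
  have h6 : (10:ℕ)^(m-l) = 10 * 10^(m-l-1) := by rw [← pow_succ']; congr 1; omega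
  rw [h5, h6, ← Nat.mul_sub]
  exact Nat.mul_mod_right 10 _

lemma D0 {n m l : ℕ} (hmn : m < n) (hnl : n ≤ l) :
    (10^n - 10^m) / 10^l % 10 = 0 := by
  have h1 := pow_le_pow10 hnl
  have h2 : (10:ℕ)^m ≥ 1 := Nat.one_le_pow _ _ (by norm_num)
  have h3 : (10:ℕ)^m ≤ 10^n := pow_le_pow10 (le_of_lt hmn)
  rw [Nat.div_eq_of_lt (by omega)]

lemma S9 {m n L : ℕ} (hmn : m < n) (hnL : n ≤ L) :
    ds L (10^n - 10^m) = 9*(n-m) := by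
  unfold ds
  have h : ∀ l ∈ range L, (10^n - 10^m) / 10^l % 10 = if l ∈ Finset.Ico m n then 9 else 0 := by
    intro l _
    by_cases hc : l ∈ Finset.Ico m n
    · rw [if_pos hc]
      rw [Finset.mem_Ico] at hc
      exact D1 hc.1 hc.2
    · rw [if_neg hc]
      rw [Finset.mem_Ico] at hc
      push_neg at hc
      rcases Nat.lt_or_ge l m with h1 | h1
      · exact D2 h1 (le_of_lt hmn)
      · exact D0 hmn (hc h1)
  rw [Finset.sum_congr rfl h, Finset.sum_ite_mem]
  have : range L ∩ Finset.Ico m n = Finset.Ico m n := by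
    apply Finset.inter_eq_right.mpr
    intro l hl
    rw [Finset.mem_Ico] at hl
    rw [Finset.mem_range]
    omega
  rw [this, Finset.sum_const, Nat.card_Ico, smul_eq_mul, mul_comm]

lemma S9' {m n : ℕ} (hm : 2 ≤ m) (hmn : m < n) :
    ds n (10^(n-1) - 10^(m-1) + 1) = 1 + 9*((n-1)-(m-1)) := by
  obtain ⟨y, hy⟩ : ∃ y, 10^(n-1) - 10^(m-1) = y := ⟨_, rfl⟩
  rw [hy]
  have hy10 : y % 10 = 0 := by
    have := D2 (n := n-1) (m := m-1) (l := 0) (by omega) (by omega)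
    rw [hy] at this
    simpa using this
  have hstep : ∀ i, (y+1)/10^(i+1) = y/10^(i+1) := by
    intro i
    apply Nat.succ_div_of_not_dvd
    intro hdvd
    have h10 : (10:ℕ) ∣ y + 1 := dvd_trans (dvd_pow_self 10 (Nat.succ_ne_zero i)) hdvd
    omega
  have hn1 : n = (n-1) + 1 := by omega
  have hds : ∀ z : ℕ, ds n z = (∑ i ∈ range (n-1), z/10^(i+1)%10) + z%10 := by
    intro z
    unfold ds
    rw [hn1]
    rw [Finset.sum_range_succ']
    simp
  have hS := S9 (m := m-1) (n := n-1) (L := n) (by omega) (by omega)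
  rw [hy] at hS
  rw [hds] at hS ⊢
  have he : ∀ i ∈ range (n-1), (y+1)/10^(i+1)%10 = y/10^(i+1)%10 := by
    intro i _; rw [hstep]
  rw [Finset.sum_congr rfl he]
  have hmod : (y+1) % 10 = 1 := by omega
  rw [hmod]
  omega
set_option maxHeartbeats 1000000 in
lemma Mu_bound (n N i₀ : ℕ) (hN : 0 < N) (hn1 : 1 ≤ n)
    (hi : i₀ = if N ≤ 10 ^ n - 10 ^ (n / 2) then 10 ^ (n - 1) - 10 ^ (n / 2 - 1) + 1
          else 10 ^ n - 10 ^ (n / 2)) :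
    i₀ < 10^n ∧ |((ds n i₀:ℝ) - (i₀:ℝ)/10^(n-1)) - 9/2*n| ≤ 17 := by
  have hmn : n/2 < n := Nat.div_lt_self (by omega) (by norm_num)
  have hA10 : (10:ℝ)^n = 10*10^(n-1) := by
    rw [← pow_succ']; congr 1; omega
  have hApos : (0:ℝ) < (10:ℝ)^(n-1) := by positivity
  have hmhalf : 2*(n/2) ≤ n ∧ n ≤ 2*(n/2) + 1 := by omega
  split_ifs at hi with hcase
  · -- case 1
    by_cases hm2 : 2 ≤ n/2
    · have hds := S9' hm2 hmn
      rw [← hi] at hds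
      have hb1 : 1 ≤ (10:ℕ)^(n/2-1) := Nat.one_le_pow _ _ (by norm_num)
      have hba : (10:ℕ)^(n/2-1) ≤ 10^(n-1) := pow_le_pow10 (by omega)
      have hba2 : (10:ℕ)^(n/2-1) ≤ 10^(n-2) := pow_le_pow10 (by omega)
      have hlt : i₀ < 10^n := by
        have : (10:ℕ)^(n-1) < 10^n := Nat.pow_lt_pow_right (by norm_num) (by omega)
        omega
      refine ⟨hlt, ?_⟩
      have hcast : (i₀:ℝ) = (10:ℝ)^(n-1) - (10:ℝ)^(n/2-1) + 1 := by
        rw [hi]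
        push_cast [Nat.cast_sub hba]
        ring
      have hdc : ((ds n i₀ : ℕ):ℝ) = 1 + 9*((n:ℝ) - (n/2:ℕ)) := by
        rw [hds]
        have : (n-1) - (n/2-1) = n - n/2 := by omega
        rw [this]
        push_cast [Nat.cast_sub (le_of_lt hmn)]
        ring
      -- bounds on i₀/A
      have hup : (i₀:ℝ)/(10:ℝ)^(n-1) ≤ 11/10 := by
        rw [div_le_iff₀ hApos]
        have h1 : ((10:ℕ)^(n/2-1):ℝ) ≥ 1 := by exact_mod_cast hb1
        have hA1 : (1:ℝ) ≤ (10:ℝ)^(n-1) := one_le_pow₀ (by norm_num)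
        rw [hcast]
        push_cast
        nlinarith
      have hlow : (9:ℝ)/10 ≤ (i₀:ℝ)/(10:ℝ)^(n-1) := by
        rw [le_div_iff₀ hApos]
        have hA2 : (10:ℝ)^(n-1) = 10*(10:ℝ)^(n-2) := by
          rw [← pow_succ']; congr 1; omega
        have h2 : ((10:ℝ))^(n/2-1) ≤ (10:ℝ)^(n-2) := by
          exact_mod_cast hba2
        rw [hcast, hA2]
        nlinarith
      -- n/2 bounds
      have hm1 : ((2*(n/2):ℕ):ℝ) ≤ ((n:ℕ):ℝ) := Nat.cast_le.mpr hmhalf.1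
      have hm2' : ((n:ℕ):ℝ) ≤ ((2*(n/2)+1:ℕ):ℝ) := Nat.cast_le.mpr hmhalf.2
      push_cast at hm1 hm2'
      rw [hdc, abs_le]
      constructor <;> linarith
    · -- n ≤ 3
      have hn3 : n ≤ 3 := by omega
      have hm0 : n/2 - 1 = 0 := by omega
      rw [hm0, pow_zero] at hi
      have hp1 : 1 ≤ (10:ℕ)^(n-1) := Nat.one_le_pow _ _ (by norm_num)
      have hi' : i₀ = 10^(n-1) := by omega
      interval_cases n <;>
        · subst hi'
          refine ⟨by norm_num, ?_⟩
          norm_num [ds, Finset.sum_range_succ, abs_le]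
  · -- case 2
    have hds := S9 hmn (le_refl n)
    rw [← hi] at hds
    have hb1 : 1 ≤ (10:ℕ)^(n/2) := Nat.one_le_pow _ _ (by norm_num)
    have hba : (10:ℕ)^(n/2) ≤ 10^(n-1) := pow_le_pow10 (by omega)
    have hlt : i₀ < 10^n := by
      have : (10:ℕ)^(n/2) ≤ 10^n := pow_le_pow10 (by omega)
      omega
    refine ⟨hlt, ?_⟩
    have hcast : (i₀:ℝ) = (10:ℝ)^n - (10:ℝ)^(n/2) := by
      rw [hi]
      push_cast [Nat.cast_sub (pow_le_pow10 (le_of_lt hmn))]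
      ring
    have hdc : ((ds n i₀ : ℕ):ℝ) = 9*((n:ℝ) - (n/2:ℕ)) := by
      rw [hds]
      push_cast [Nat.cast_sub (le_of_lt hmn)]
      ring
    have hup : (i₀:ℝ)/(10:ℝ)^(n-1) ≤ 10 := by
      rw [div_le_iff₀ hApos, hcast, hA10]
      have h1 : ((10:ℝ))^(n/2) ≥ 0 := by positivity
      linarith
    have hlow : (9:ℝ) ≤ (i₀:ℝ)/(10:ℝ)^(n-1) := by
      rw [le_div_iff₀ hApos, hcast, hA10]
      have h2 : ((10:ℝ))^(n/2) ≤ (10:ℝ)^(n-1) := by exact_mod_cast hba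
      linarith
    have hm1 : ((2*(n/2):ℕ):ℝ) ≤ ((n:ℕ):ℝ) := Nat.cast_le.mpr hmhalf.1
    have hm2' : ((n:ℕ):ℝ) ≤ ((2*(n/2)+1:ℕ):ℝ) := Nat.cast_le.mpr hmhalf.2
    push_cast at hm1 hm2'
    rw [hdc, abs_le]
    constructor <;> linarith
set_option maxHeartbeats 2000000 in
theorem stmt8 :
    ∃ C > (0:ℝ), ∀ N : ℕ, 0 < N →
      ∀ n i₀ : ℕ, n = (Nat.digits 10 N).length →
        i₀ = (if N ≤ 10 ^ n - 10 ^ (n / 2) then 10 ^ (n - 1) - 10 ^ (n / 2 - 1) + 1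
              else 10 ^ n - 10 ^ (n / 2)) →
        |(∑ i ∈ Finset.range (N + 1),
            (∑ j ∈ Finset.range n,
              (Int.fract ((i:ℝ) / 10 ^ j) - Int.fract ((i₀:ℝ) / 10 ^ j)))^2) -
          (11 / 108) * (n:ℝ) * (N:ℝ)| ≤ C * (N:ℝ) := by
  refine ⟨1000, by norm_num, ?_⟩
  intro N hN n i₀ hn hi
  have h10 : (1:ℕ) < 10 := by norm_num
  have hNlt : N < 10^n := by rw [hn]; exact Nat.lt_base_pow_length_digits h10
  have hn1 : 1 ≤ n := by
    rw [hn]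
    have hne : Nat.digits 10 N ≠ [] := Nat.digits_ne_nil_iff_ne_zero.mpr hN.ne'
    exact List.length_pos_iff.mpr hne
  have hpw : (10:ℕ)^n ≤ 10*N := by rw [hn]; exact Nat.base_pow_length_digits_le 10 N h10 hN.ne'
  have hsplit10 : (10:ℕ)^n = 10*10^(n-1) := by rw [← pow_succ']; congr 1; omega
  have hNge : 10^(n-1) ≤ N := by omega
  have hnN : n ≤ N := by
    have h1 : n - 1 < 10^(n-1) := Nat.lt_pow_self (n := n-1) h10
    omega
  obtain ⟨hi₀lt, hMu⟩ := Mu_bound n N i₀ hN hn1 hi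
  have hApos : (0:ℝ) < (10:ℝ)^(n-1) := by positivity
  have hfr : ∀ i : ℕ, i < 10^n → ∑ j ∈ range n, Int.fract ((i:ℝ)/10^j)
      = ((ds n i : ℝ) - (i:ℝ)/10^(n-1))/9 := by
    intro i hilt
    have h1 : ∀ j ∈ range n, Int.fract ((i:ℝ)/10^j) = ((i % 10^j : ℕ):ℝ)/10^j :=
      fun j _ => fract_nat_div i j
    rw [Finset.sum_congr rfl h1]
    have h2 := ID i n
    rw [Nat.mod_eq_of_lt hilt] at h2
    linarith
  set E : ℝ := ((ds n i₀:ℝ) - (i₀:ℝ)/10^(n-1)) - 9/2*n with hE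
  clear_value E
  have hinner : ∀ i ∈ range (N+1),
      ∑ j ∈ range n, (Int.fract ((i:ℝ)/10^j) - Int.fract ((i₀:ℝ)/10^j))
      = (X n i - ((i:ℝ)/10^(n-1) + E))/9 := by
    intro i hir
    rw [Finset.mem_range] at hir
    rw [Finset.sum_sub_distrib, hfr i (by omega), hfr i₀ hi₀lt]
    simp only [X, hE]
    ring
  have hsum : (∑ i ∈ range (N+1),
        (∑ j ∈ range n, (Int.fract ((i:ℝ)/10^j) - Int.fract ((i₀:ℝ)/10^j)))^2)
      = ((∑ i ∈ range (N+1), (X n i)^2)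
         - 2/(10:ℝ)^(n-1) * (∑ i ∈ range (N+1), X n i * (i:ℝ))
         - 2*E*(∑ i ∈ range (N+1), X n i)
         + (∑ i ∈ range (N+1), ((i:ℝ)/10^(n-1) + E)^2))/81 := by
    have hterm : ∀ i ∈ range (N+1),
        (∑ j ∈ range n, (Int.fract ((i:ℝ)/10^j) - Int.fract ((i₀:ℝ)/10^j)))^2
        = ((X n i)^2 - 2/(10:ℝ)^(n-1)*(X n i*(i:ℝ)) - 2*E*(X n i)
            + ((i:ℝ)/10^(n-1)+E)^2)/81 := by
      intro i hir
      rw [hinner i hir]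
      have h9 : ((10:ℝ)^(n-1)) ≠ 0 := ne_of_gt hApos
      field_simp
      ring
    rw [Finset.sum_congr rfl hterm, ← Finset.sum_div]
    congr 1
    rw [Finset.sum_add_distrib, Finset.sum_sub_distrib, Finset.sum_sub_distrib,
      ← Finset.mul_sum, ← Finset.mul_sum]
  rw [hsum]
  have hL2 := L2_s8 n (N+1) (by omega)
  have hL3 := L3 n (N+1) (by omega)
  have hL1 := L1_s8 n (N+1) (by omega)
  push_cast at hL2
  have hNr : (1:ℝ) ≤ (N:ℝ) := by exact_mod_cast hN
  have hc1 : (10:ℝ)^n ≤ 10*(N:ℝ) := by exact_mod_cast hpw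
  have hc2 : (n:ℝ) ≤ (N:ℝ) := by exact_mod_cast hnN
  have hsr : (10:ℝ)^n = 10*(10:ℝ)^(n-1) := by
    rw [← pow_succ']; congr 1; omega
  have hNc : (N:ℝ) < 10*(10:ℝ)^(n-1) := by
    rw [← hsr]; exact_mod_cast hNlt
  have hQb : (∑ i ∈ range (N+1), ((i:ℝ)/10^(n-1) + E)^2) ≤ 729*((N:ℝ)+1) := by
    have hb : ∀ i ∈ range (N+1), ((i:ℝ)/10^(n-1) + E)^2 ≤ 729 := by
      intro i hir
      rw [Finset.mem_range] at hir
      have h1 : (0:ℝ) ≤ (i:ℝ)/10^(n-1) := by positivity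
      have h2 : (i:ℝ)/10^(n-1) ≤ 10 := by
        rw [div_le_iff₀ hApos]
        have hiN : (i:ℝ) ≤ N := by exact_mod_cast (by omega : i ≤ N)
        linarith
      obtain ⟨hel, heu⟩ := abs_le.mp hMu
      nlinarith [mul_nonneg (by linarith : (0:ℝ) ≤ 27 - ((i:ℝ)/10^(n-1)+E))
        (by linarith : (0:ℝ) ≤ (i:ℝ)/10^(n-1)+E+17)]
    calc (∑ i ∈ range (N+1), ((i:ℝ)/10^(n-1) + E)^2) ≤ ∑ _i ∈ range (N+1), (729:ℝ) :=
        Finset.sum_le_sum hb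
      _ = 729*((N:ℝ)+1) := by
        rw [Finset.sum_const]
        simp only [Finset.card_range, nsmul_eq_mul]
        push_cast; ring
  have hQ0 : (0:ℝ) ≤ ∑ i ∈ range (N+1), ((i:ℝ)/10^(n-1) + E)^2 :=
    Finset.sum_nonneg fun i _ => sq_nonneg _
  have hB400 : |2/(10:ℝ)^(n-1) * (∑ i ∈ range (N+1), X n i * (i:ℝ))| ≤ 400*(N:ℝ) := by
    rw [abs_mul, abs_of_pos (by positivity : (0:ℝ) < 2/(10:ℝ)^(n-1))]
    have h100 : (100:ℝ)^n = 10^n*10^n := by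
      rw [show (100:ℝ)=10*10 by norm_num, mul_pow]
    calc 2/(10:ℝ)^(n-1) * |∑ i ∈ range (N+1), X n i * (i:ℝ)|
        ≤ 2/(10:ℝ)^(n-1) * (2*100^n) :=
          mul_le_mul_of_nonneg_left hL3 (by positivity)
      _ = 40*(10:ℝ)^n := by
          rw [h100, hsr]; field_simp; ring
      _ ≤ 40*(10*(N:ℝ)) := by linarith
      _ = 400*(N:ℝ) := by ring
  have hEF : |2*E*(∑ i ∈ range (N+1), X n i)| ≤ 680*(N:ℝ) := by
    rw [abs_mul, abs_mul, abs_two]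
    have h1 := abs_nonneg E
    have h2 := abs_nonneg (∑ i ∈ range (N+1), X n i)
    nlinarith [hMu, hL1, hc1, hNr]
  obtain ⟨hA1, hA2⟩ := abs_le.mp hL2
  obtain ⟨hB1, hB2⟩ := abs_le.mp hB400
  obtain ⟨hE1, hE2⟩ := abs_le.mp hEF
  rw [abs_le]
  constructor <;> nlinarith [hc1, hc2, hNr, hQb, hQ0]
end

section
/- Let b ≥ 2 be an integer and let N satisfy b^{n−1} ≤ N ≤ b^n − 1. Let ν_N = (1/N)∑_{k=1}^{N} δ_{⟨log_b k⟩} be the empirical measure of fractional parts of base-b logarithms. Then for i with b^{n−1} ≤ i ≤ N−1 and t ∈ [log_b i − n + 1, log_b(i+1) − n + 1), the distribution function satisfies ν_N([0,t]) = (n + ∑_{j=0}^{n−1}(⌊i·b^{−j}⌋ − b^{n−1−j}))/N. -/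
/-!
Write `n = d + 1`. For `1 ≤ k < b ^ (d + 1)` with `m = Nat.log b k`, one has
`⟨log_b k⟩ = log_b k - m`, so `⟨log_b k⟩ ≤ t` iff `k * b ^ (d - m) ≤ b ^ (t + d)`;
the range of `t` is exactly the condition `⌊b ^ (t + d)⌋ = i`, and the criterion becomes
`k * b ^ (d - m) ≤ i`.
The counted `k` with `m + 1` digits therefore form the interval `[b ^ m, i / b ^ (d - m)]`, and
summing the lengths of these intervals over `m` gives the formula.
-/

open MeasureTheory

/-- Empirical measure of the fractional parts of the base-`b` logarithms of `1,…,N`. -/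
noncomputable def empLog (b N : ℕ) : Measure ℝ :=
  (N : ENNReal)⁻¹ • ∑ k ∈ Finset.Icc 1 N, Measure.dirac (Int.fract (Real.logb b k))

open Finset Real

theorem empLog_apply (b N : ℕ) {s : Set ℝ} [DecidablePred (· ∈ s)] (hs : MeasurableSet s) :
    empLog b N s = (N : ENNReal)⁻¹ * #{k ∈ Icc 1 N | Int.fract (logb b (k : ℕ)) ∈ s} := by
  simp [empLog, Measure.dirac_apply' _ hs, Set.indicator_apply, Finset.sum_boole]

theorem Real.natFloor_rpow_eq {b s : ℝ} (hb : 1 < b) {i : ℕ} (hi : 0 < i)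
    (h₁ : logb b i ≤ s) (h₂ : s < logb b (i + 1)) : ⌊b ^ s⌋₊ = i := by
  rw [Nat.floor_eq_iff (by positivity)]
  constructor
  · rwa [← logb_le_iff_le_rpow hb (by positivity)]
  · rwa [← lt_logb_iff_rpow_lt hb (by positivity)]

theorem Int.fract_logb_natCast {b : ℕ} (k : ℕ) :
    Int.fract (logb b k) = logb b k - Nat.log b k := by
  rw [Int.fract, floor_logb_natCast k.cast_nonneg, Int.log_natCast, Int.cast_natCast]

theorem fract_logb_le_iff {b k d : ℕ} (hb : 1 < b) (hk : 0 < k) (hkd : Nat.log b k ≤ d)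
    (t : ℝ) :
    Int.fract (logb b k) ≤ t ↔ (k : ℝ) * b ^ (d - Nat.log b k) ≤ (b : ℝ) ^ (t + d) := by
  have hb' : (1 : ℝ) < b := by exact_mod_cast hb
  have hsplit : (b : ℝ) ^ (t + d) = b ^ (t + Nat.log b k) * b ^ (d - Nat.log b k) := by
    rw [← rpow_natCast, ← rpow_add (by positivity), Nat.cast_sub hkd]
    ring_nf
  rw [hsplit, mul_le_mul_iff_left₀ (by positivity), ← logb_le_iff_le_rpow hb' (by positivity),
    Int.fract_logb_natCast, sub_le_iff_le_add]

theorem fract_logb_mem_Icc_iff {b k d : ℕ} (hb : 1 < b) (hk : 0 < k) (hkd : k < b ^ (d + 1))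
    (t : ℝ) :
    Int.fract (logb b k) ∈ Set.Icc 0 t ↔
      k * b ^ (d - Nat.log b k) ≤ ⌊(b : ℝ) ^ (t + d)⌋₊ := by
  rw [Set.mem_Icc, and_iff_right (Int.fract_nonneg _), Nat.le_floor_iff (by positivity),
    fract_logb_le_iff hb hk (Nat.lt_succ_iff.mp (Nat.log_lt_of_lt_pow hk.ne' hkd))]
  push_cast
  rfl

section DigitBlocks

variable {b d i : ℕ}

theorem pow_sub_le_div_pow (hb : 0 < b) (hi : b ^ d ≤ i) {j : ℕ} (hj : j ≤ d) :
    b ^ (d - j) ≤ i / b ^ j := by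
  rwa [Nat.le_div_iff_mul_le (by positivity), ← pow_add, Nat.sub_add_cancel hj]

theorem div_pow_lt_pow_sub_add_one (hb : 0 < b) (hi : i < b ^ (d + 1)) {j : ℕ} (hj : j ≤ d) :
    i / b ^ j < b ^ (d - j + 1) := by
  rwa [Nat.div_lt_iff_lt_mul (by positivity), ← pow_add, show d - j + 1 + j = d + 1 by omega]

theorem log_eq_of_mem_Icc_div_pow (hb : 1 < b) (hi : i < b ^ (d + 1)) {j k : ℕ} (hj : j ≤ d)
    (hk : k ∈ Icc (b ^ (d - j)) (i / b ^ j)) : Nat.log b k = d - j := by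
  rw [mem_Icc] at hk
  exact Nat.log_eq_of_pow_le_of_lt_pow hk.1
    (hk.2.trans_lt (div_pow_lt_pow_sub_add_one (by omega) hi hj))

theorem filter_mul_pow_le_eq_biUnion (hb : 1 < b) (hi : i < b ^ (d + 1)) {N : ℕ} (hiN : i ≤ N) :
    {k ∈ Icc 1 N | k * b ^ (d - Nat.log b k) ≤ i} =
      (range (d + 1)).biUnion fun j ↦ Icc (b ^ (d - j)) (i / b ^ j) := by
  ext k
  simp only [mem_filter, mem_Icc, mem_biUnion, mem_range]
  constructor
  · rintro ⟨⟨hk1, -⟩, hki⟩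
    have hlog : Nat.log b k ≤ d := Nat.lt_succ_iff.mp <| Nat.log_lt_of_lt_pow (by omega) <|
      (Nat.le_mul_of_pos_right k (by positivity)).trans hki |>.trans_lt hi
    refine ⟨d - Nat.log b k, by omega, ?_, ?_⟩
    · rw [Nat.sub_sub_self hlog]
      exact Nat.pow_log_le_self b (by omega)
    · rwa [Nat.le_div_iff_mul_le (by positivity)]
  · rintro ⟨j, hj, hk⟩
    have hlog := log_eq_of_mem_Icc_div_pow hb hi (by omega) (mem_Icc.mpr hk)
    have hk1 : 1 ≤ k := (Nat.one_le_pow _ _ (by omega)).trans hk.1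
    refine ⟨⟨hk1, (hk.2.trans (Nat.div_le_self _ _)).trans hiN⟩, ?_⟩
    rw [hlog, Nat.sub_sub_self (by omega), ← Nat.le_div_iff_mul_le (by positivity)]
    exact hk.2

theorem card_filter_mul_pow_le (hb : 1 < b) (hi₁ : b ^ d ≤ i) (hi₂ : i < b ^ (d + 1))
    {N : ℕ} (hiN : i ≤ N) :
    (#{k ∈ Icc 1 N | k * b ^ (d - Nat.log b k) ≤ i} : ℝ) =
      ((d + 1 : ℕ) : ℝ) +
        ∑ j ∈ range (d + 1), (((i / b ^ j : ℕ) : ℝ) - ((b ^ (d - j) : ℕ) : ℝ)) := by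
  have hdisj :
      (range (d + 1) : Set ℕ).PairwiseDisjoint fun j ↦ Icc (b ^ (d - j)) (i / b ^ j) := by
    intro j hj j' hj' hne
    simp only [coe_range, Set.mem_Iio] at hj hj'
    refine disjoint_left.mpr fun k hk hk' ↦ hne ?_
    have := (log_eq_of_mem_Icc_div_pow hb hi₂ (by omega) hk).symm.trans
      (log_eq_of_mem_Icc_div_pow hb hi₂ (by omega) hk')
    omega
  rw [filter_mul_pow_le_eq_biUnion hb hi₂ hiN, card_biUnion hdisj, Nat.cast_sum]
  have hblock : ∀ j ∈ range (d + 1), ((#(Icc (b ^ (d - j)) (i / b ^ j)) : ℕ) : ℝ) =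
      ((i / b ^ j : ℕ) : ℝ) - ((b ^ (d - j) : ℕ) : ℝ) + 1 := fun j hj ↦ by
    have := pow_sub_le_div_pow (by omega) hi₁ (Nat.lt_succ_iff.mp (mem_range.mp hj))
    rw [Nat.card_Icc, Nat.cast_sub (by omega), Nat.cast_add, Nat.cast_one]
    ring
  rw [sum_congr rfl hblock, sum_add_distrib, sum_const, card_range, nsmul_one, add_comm]

end DigitBlocks

theorem stmt11_general (b n N i : ℕ) (hb : 2 ≤ b)
    (hN2 : N ≤ b ^ n - 1)
    (hi1 : b ^ (n - 1) ≤ i) (hi2 : i ≤ N - 1)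
    (t : ℝ) (ht1 : Real.logb b i - n + 1 ≤ t) (ht2 : t < Real.logb b (i + 1) - n + 1) :
    (empLog b N) (Set.Icc 0 t) =
      ENNReal.ofReal (((n : ℝ) + ∑ j ∈ Finset.range n,
        (((i / b ^ j : ℕ) : ℝ) - ((b ^ (n - 1 - j) : ℕ) : ℝ))) / (N : ℝ)) := by
  obtain ⟨d, rfl⟩ : ∃ d, n = d + 1 := Nat.exists_eq_add_one.mpr <| Nat.pos_of_ne_zero <| by
    rintro rfl
    simp only [zero_tsub, pow_zero, tsub_self, nonpos_iff_eq_zero] at hi1 hN2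
    omega
  simp only [Nat.add_sub_cancel] at hi1 ⊢
  have hb1 : 1 < b := hb
  have hi0 : 0 < i := (Nat.one_le_pow _ _ (by omega)).trans hi1
  have hiN : i < N := by omega
  have hNd : N < b ^ (d + 1) := by have := Nat.one_le_pow (d + 1) b (by omega); omega
  have hfloor : ⌊(b : ℝ) ^ (t + d)⌋₊ = i :=
    natFloor_rpow_eq (by exact_mod_cast hb1) hi0 (by push_cast at ht1; linarith)
      (by push_cast at ht2 ⊢; linarith)
  have hfilter : {k ∈ Icc 1 N | Int.fract (logb b (k : ℕ)) ∈ Set.Icc 0 t} =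
      {k ∈ Icc 1 N | k * b ^ (d - Nat.log b k) ≤ i} := filter_congr fun k hk ↦ by
    rw [mem_Icc] at hk
    rw [fract_logb_mem_Icc_iff (d := d) hb1 (by omega) (by omega), hfloor]
  rw [empLog_apply _ _ measurableSet_Icc, hfilter,
    ← card_filter_mul_pow_le hb1 hi1 (by omega) hiN.le,
    ENNReal.ofReal_div_of_pos (by exact_mod_cast hi0.trans hiN), ENNReal.ofReal_natCast,
    ENNReal.ofReal_natCast, div_eq_mul_inv, mul_comm]

theorem stmt11 (b n N i : ℕ) (hb : 2 ≤ b)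
    (hN1 : b ^ (n - 1) ≤ N) (hN2 : N ≤ b ^ n - 1)
    (hi1 : b ^ (n - 1) ≤ i) (hi2 : i ≤ N - 1)
    (t : ℝ) (ht1 : Real.logb b i - n + 1 ≤ t) (ht2 : t < Real.logb b (i + 1) - n + 1) :
    (empLog b N) (Set.Icc 0 t) =
      ENNReal.ofReal (((n : ℝ) + ∑ j ∈ Finset.range n,
        (((i / b ^ j : ℕ) : ℝ) - ((b ^ (n - 1 - j) : ℕ) : ℝ))) / (N : ℝ)) :=
  stmt11_general b n N i hb hN2 hi1 hi2 t ht1 ht2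
end
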